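/- arXiv:1801.03180 — 6 statements merged into one kernel-verified Lean document; each statement's English description precedes it below -/
import Mathlib

section
/- Let p be an odd prime, α ≥ 1, and let a, b ∈ ℤ/p^αℤ with G(a,b) := p^{-α} · Σ_{t ∈ ℤ/p^αℤ} e^{2πi(at + bt²)/p^α}. If p^α/gcd(b, p^α) ≥ p^α/gcd(a, p^α) and gcd(b,p^α) < p^α, then |G(a,b)| = (gcd(b,p^α)/p^α)^{1/2}; and if p^α/gcd(a,p^α) > p^α/gcd(b,p^α) then G(a,b) = 0. -/
open scoped BigOperators

/-- The standard additive character of `ℤ/p^αℤ`. -/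
noncomputable def zchar (p α : ℕ) (x : ZMod (p ^ α)) : ℂ :=
  Complex.exp (2 * Real.pi * Complex.I * (x.val : ℂ) / (p : ℂ) ^ α)

/-- The normalized quadratic Gauss sum `G(a,b)` over `ℤ/p^αℤ`. -/
noncomputable def gaussSumZ (p α : ℕ) [NeZero (p ^ α)] (a b : ZMod (p ^ α)) : ℂ :=
  ((p : ℂ) ^ α)⁻¹ * ∑ t : ZMod (p ^ α), zchar p α (a * t + b * t ^ 2)

/-!
Expanding `S * conj S` for `S = ∑ₜ ψ (a t + b t²)` and substituting `t = s + u` gives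
`∑ᵤ ψ (a u + b u²) ∑ₛ ψ (2 b u s) = N ∑_{b u = 0} ψ (a u)`, because `2` is a unit. The kernel of
multiplication by `b` has order `gcd (b, N)`, and the character `u ↦ ψ (a u)` on it is trivial
exactly when `ord a ∣ ord b`; for `N = p ^ α` this divisibility is the inequality `ord a ≤ ord b`,
and `ord x = N / gcd (x, N)`.
-/

open Finset ComplexConjugate

theorem zchar_eq_stdAddChar (p α : ℕ) [NeZero (p ^ α)] (x : ZMod (p ^ α)) :
    zchar p α x = ZMod.stdAddChar x := by
  rw [zchar, ZMod.stdAddChar_apply, ZMod.toCircle_apply, Nat.cast_pow]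

namespace AddChar

variable {R : Type*} [CommRing R] [Fintype R] [DecidableEq R] {ψ : AddChar R ℂ}

theorem sum_quadratic_mul_conj (hψ : ψ.IsPrimitive) (h2 : IsUnit (2 : R)) (a b : R) :
    (∑ t, ψ (a * t + b * t ^ 2)) * conj (∑ t, ψ (a * t + b * t ^ 2)) =
      Fintype.card R * ∑ u : (AddMonoidHom.mulLeft b).ker, ψ (a * u) := by
  have h2b (u : R) : 2 * b * u = 0 ↔ b * u = 0 := by
    rw [mul_assoc, h2.mul_right_eq_zero]
  calc (∑ t, ψ (a * t + b * t ^ 2)) * conj (∑ t, ψ (a * t + b * t ^ 2))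
      = ∑ s, ∑ t, ψ ((a * t + b * t ^ 2) - (a * s + b * s ^ 2)) := by
        rw [map_sum, sum_mul_sum, sum_comm]
        simp only [← map_neg_eq_conj, ← map_add_eq_mul, sub_eq_add_neg]
    _ = ∑ s, ∑ u, ψ (a * u + b * u ^ 2) * ψ (s * (2 * b * u)) := by
        refine sum_congr rfl fun s _ =>
          (Fintype.sum_equiv (Equiv.addRight s) _ _ fun u => ?_).symm
        rw [Equiv.coe_addRight, ← map_add_eq_mul]
        ring_nf
    _ = ∑ u, ψ (a * u + b * u ^ 2) * if 2 * b * u = 0 then (Fintype.card R : ℂ) else 0 := by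
        rw [sum_comm]
        simp only [← mul_sum, sum_mulShift _ hψ, apply_ite Nat.cast, Nat.cast_zero]
    _ = Fintype.card R * ∑ u : (AddMonoidHom.mulLeft b).ker, ψ (a * u) := by
        simp only [h2b, mul_ite, mul_zero, ← sum_filter, mul_sum]
        refine sum_subtype _ (fun u => by simp) _ |>.trans (sum_congr rfl fun u _ => ?_)
        have hu : b * u = 0 := u.2
        rw [show b * u ^ 2 = b * u * u by ring, hu, zero_mul, add_zero, mul_comm]

end AddChar

theorem Nat.dvd_of_le_of_dvd_prime_pow {p k x y : ℕ} (hp : p.Prime) (hx : x ∣ p ^ k)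
    (hy : y ∣ p ^ k) (hxy : x ≤ y) : x ∣ y := by
  obtain ⟨i, -, rfl⟩ := (Nat.dvd_prime_pow hp).1 hx
  obtain ⟨j, -, rfl⟩ := (Nat.dvd_prime_pow hp).1 hy
  exact pow_dvd_pow p ((Nat.pow_le_pow_iff_right hp.one_lt).1 hxy)

theorem Complex.norm_inv_natCast_mul_eq_sqrt {N : ℕ} {z : ℂ} {c : ℝ} (hN : N ≠ 0)
    (hz : z * conj z = (N : ℂ) * c) : ‖(N : ℂ)⁻¹ * z‖ = Real.sqrt (c / N) := by
  have hsq : ‖z‖ ^ 2 = N * c := by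
    rw [← Complex.normSq_eq_norm_sq]
    exact_mod_cast (Complex.mul_conj z).symm.trans hz
  rw [norm_mul, norm_inv, Complex.norm_natCast,
    ← Real.sqrt_sq (by positivity : 0 ≤ (N : ℝ)⁻¹ * ‖z‖)]
  congr 1
  rw [mul_pow, hsq]
  field_simp

namespace ZMod

variable {N : ℕ} [NeZero N]

theorem addOrderOf_eq_div_gcd_val (b : ZMod N) : addOrderOf b = N / b.val.gcd N := by
  conv_lhs => rw [← natCast_zmod_val b]
  rw [addOrderOf_coe _ (NeZero.ne N), Nat.gcd_comm]

theorem range_mulLeft (b : ZMod N) :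
    (AddMonoidHom.mulLeft b).range = AddSubgroup.zmultiples b := by
  ext x
  simp only [AddMonoidHom.mem_range, AddMonoidHom.coe_mulLeft, AddSubgroup.mem_zmultiples_iff]
  constructor
  · rintro ⟨u, rfl⟩
    exact ⟨u.val, by rw [natCast_zsmul, nsmul_eq_mul, natCast_zmod_val, mul_comm]⟩
  · rintro ⟨k, rfl⟩
    exact ⟨k, by rw [zsmul_eq_mul, mul_comm]⟩

theorem card_ker_mulLeft (b : ZMod N) :
    Nat.card (AddMonoidHom.mulLeft b).ker = b.val.gcd N := by
  have h := (AddMonoidHom.mulLeft b).ker.card_mul_index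
  rw [AddSubgroup.index_ker, range_mulLeft, Nat.card_zmultiples, Nat.card_zmod] at h
  rw [Nat.eq_div_of_mul_eq_left (addOrderOf_pos b).ne' h, addOrderOf_eq_div_gcd_val,
    Nat.div_div_self (Nat.gcd_dvd_right _ _) (NeZero.ne N)]

theorem ker_mulLeft_le_ker_mulLeft_iff (a b : ZMod N) :
    (AddMonoidHom.mulLeft b).ker ≤ (AddMonoidHom.mulLeft a).ker ↔
      addOrderOf a ∣ addOrderOf b := by
  have hmul (c : ZMod N) (n : ℕ) : c * n = 0 ↔ addOrderOf c ∣ n := by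
    rw [mul_comm, ← nsmul_eq_mul, addOrderOf_dvd_iff_nsmul_eq_zero]
  constructor
  · intro h
    have hb : b * (addOrderOf b : ZMod N) = 0 := (hmul b _).2 dvd_rfl
    exact (hmul a _).1 (h hb)
  · intro h u hu
    rw [AddMonoidHom.mem_ker, AddMonoidHom.coe_mulLeft, ← natCast_zmod_val u, hmul] at hu ⊢
    exact h.trans hu

theorem stdAddChar_eq_one_iff {x : ZMod N} : stdAddChar (N := N) x = 1 ↔ x = 0 := by
  rw [← AddChar.map_zero_eq_one (stdAddChar (N := N)), injective_stdAddChar.eq_iff]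

theorem sum_stdAddChar_ker_mulLeft (a b : ZMod N) :
    ∑ u : (AddMonoidHom.mulLeft b).ker, stdAddChar (a * (u : ZMod N)) =
      if addOrderOf a ∣ addOrderOf b then (b.val.gcd N : ℂ) else 0 := by
  classical
  let χ := (stdAddChar.mulShift a).compAddMonoidHom (AddMonoidHom.mulLeft b).ker.subtype
  have hχ : χ = 0 ↔ addOrderOf a ∣ addOrderOf b := by
    rw [← ker_mulLeft_le_ker_mulLeft_iff, AddChar.ext_iff]
    simp [χ, SetLike.le_def, AddChar.mulShift_apply, stdAddChar_eq_one_iff]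
  have h := χ.sum_eq_ite
  simp only [hχ, Fintype.card_eq_nat_card, card_ker_mulLeft] at h
  exact h

theorem sum_quadratic_mul_conj (hN : Odd N) (a b : ZMod N) :
    (∑ t, stdAddChar (a * t + b * t ^ 2)) * conj (∑ t, stdAddChar (a * t + b * t ^ 2)) =
      N * if addOrderOf a ∣ addOrderOf b then (b.val.gcd N : ℂ) else 0 := by
  have h2 : IsUnit (2 : ZMod N) := by
    exact_mod_cast (isUnit_iff_coprime 2 N).2 (Nat.coprime_two_left.2 hN)
  rw [AddChar.sum_quadratic_mul_conj (isPrimitive_stdAddChar N) h2, card,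
    sum_stdAddChar_ker_mulLeft]

end ZMod

theorem stmt_0_general (p α : ℕ) [NeZero (p ^ α)] (hp : p.Prime) (hodd : Odd p)
    (a b : ZMod (p ^ α)) :
    (p ^ α / Nat.gcd b.val (p ^ α) ≥ p ^ α / Nat.gcd a.val (p ^ α) →
      Nat.gcd b.val (p ^ α) < p ^ α →
      ‖gaussSumZ p α a b‖
        = Real.sqrt ((Nat.gcd b.val (p ^ α) : ℝ) / (p : ℝ) ^ α)) ∧
    (p ^ α / Nat.gcd a.val (p ^ α) > p ^ α / Nat.gcd b.val (p ^ α) →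
      gaussSumZ p α a b = 0) := by
  have hG : gaussSumZ p α a b =
      ((p ^ α : ℕ) : ℂ)⁻¹ * ∑ t, ZMod.stdAddChar (a * t + b * t ^ 2) := by
    simp only [gaussSumZ, zchar_eq_stdAddChar, Nat.cast_pow]
  have hS := ZMod.sum_quadratic_mul_conj (hodd.pow (n := α)) a b
  rw [← ZMod.addOrderOf_eq_div_gcd_val, ← ZMod.addOrderOf_eq_div_gcd_val, hG]
  refine ⟨fun hle _ => ?_, fun hlt => ?_⟩
  · have hdvd (x : ZMod (p ^ α)) : addOrderOf x ∣ p ^ α := by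
      simpa using addOrderOf_dvd_natCard x
    rw [if_pos (Nat.dvd_of_le_of_dvd_prime_pow hp (hdvd a) (hdvd b) hle)] at hS
    rw [Complex.norm_inv_natCast_mul_eq_sqrt (NeZero.ne _) (c := b.val.gcd (p ^ α))
      (by exact_mod_cast hS), Nat.cast_pow]
  · rw [if_neg fun h => (Nat.le_of_dvd (addOrderOf_pos b) h).not_gt hlt, mul_zero,
      Complex.mul_conj, Complex.ofReal_eq_zero, Complex.normSq_eq_zero] at hS
    rw [hS, mul_zero]

theorem stmt_0 (p α : ℕ) [NeZero (p ^ α)] (hp : p.Prime) (hodd : Odd p) (hα : 1 ≤ α)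
    (a b : ZMod (p ^ α)) :
    (p ^ α / Nat.gcd b.val (p ^ α) ≥ p ^ α / Nat.gcd a.val (p ^ α) →
      Nat.gcd b.val (p ^ α) < p ^ α →
      ‖gaussSumZ p α a b‖
        = Real.sqrt ((Nat.gcd b.val (p ^ α) : ℝ) / (p : ℝ) ^ α)) ∧
    (p ^ α / Nat.gcd a.val (p ^ α) > p ^ α / Nat.gcd b.val (p ^ α) →
      gaussSumZ p α a b = 0) :=
  stmt_0_general p α hp hodd a b
end

section
/- Let G be a finite abelian group, μ a finite measure (nonnegative function summing against counting measure) on the dual group Ĝ, and let normalized Haar measure on Ĝ be m̂ with total mass making the Fourier inversion formula hold. Suppose balls B^G_ρ and B^{Ĝ}_ρ satisfy the Littlewood-Paley system axioms with constants C₁, C₂, C₃, a, b, A, B where m(B^G_ρ(0)) ≤ C₁ρⁿ, the smooth cutoffs φ_ρ = χ_{B^G_ρ(0)} satisfy |φ̂_ρ(ξ)| ≤ C₂ s^{-n} for -ξ ∉ B^{Ĝ}_s(0), s ≥ 1/ρ, and ∫|φ̂_ρ| dm̂ ≤ C₃; and μ satisfies μ(B^{Ĝ}_ρ(ξ)) ≤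 Aρ^a and |μ̌(x)| ≤ Bρ^{-b/2} for x ∉ B^G_ρ(0), with 0 < b ≤ a < n. Then for every Borel set E ⊆ G, ‖χ̂_E‖_{L²(μ)} ≲_{n,a} (C₁+C₂)^{(1-θ)/2} A^{(1-θ)/2} B^{θ/2} m(E)^{1/r₀}, where θ = 2(n-a)/(2(n-a)+b) and r₀ = (4(n-a)+2b)/(4(n-a)+b). -/
/-!
Split the kernel `μ̌ = ∑ ξ, w ξ e(·, ξ)` of the quadratic form `∑ ξ, w ξ |f̂ ξ|²` at scale `ρ`
with the cutoff `φ_ρ`. The far part `(1 - φ_ρ) μ̌` is bounded pointwise by the decay of `μ̌`, which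
costs `B ρ^(-b/2) ‖f‖₁²`. The near part `φ_ρ μ̌` is the inverse transform of `(μ ∗ φ̂_ρ) / |G|`,
so by Plancherel it costs `‖μ ∗ φ̂_ρ‖_∞ ‖f‖₂²`, and `‖μ ∗ φ̂_ρ‖_∞ ≲ (C₁ + C₂) A ρ^(n-a)` by cutting
`Ĝ` into the ball of radius `1/ρ` and dyadic shells, using the ball growth of `μ` and the decay
of `φ̂_ρ`. For `f = 1_E` both norms equal `|E|`, and optimising over `ρ` gives the bound.
-/

open ComplexConjugate Finset Filter Topology

lemma map_neg_eq_conj_of_norm_eq_one {G : Type*} [AddGroup G] {χ : G → ℂ}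
    (hadd : ∀ x y, χ (x + y) = χ x * χ y) (hnorm : ∀ x, ‖χ x‖ = 1) (x : G) :
    χ (-x) = conj (χ x) := by
  have h0 : χ 0 = 1 := by
    have hne : χ 0 ≠ 0 := norm_ne_zero_iff.mp (by rw [hnorm]; exact one_ne_zero)
    simpa [hne] using hadd 0 0
  rw [← Complex.inv_eq_conj (hnorm x)]
  exact eq_inv_of_mul_eq_one_left (by rw [← hadd, neg_add_cancel, h0])

lemma norm_sum_sum_mul_conj_le {G : Type*} [AddGroup G] [Fintype G] (f k : G → ℂ) {c : ℝ}
    (hk : ∀ z, ‖k z‖ ≤ c) :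
    ‖∑ x, ∑ y, f x * conj (f y) * k (y - x)‖ ≤ c * (∑ x, ‖f x‖) ^ 2 := by
  calc ‖∑ x, ∑ y, f x * conj (f y) * k (y - x)‖
      ≤ ∑ x, ∑ y, ‖f x‖ * ‖f y‖ * c := by
        refine (norm_sum_le _ _).trans (sum_le_sum fun x _ => (norm_sum_le _ _).trans ?_)
        refine sum_le_sum fun y _ => ?_
        rw [norm_mul, norm_mul, Complex.norm_conj]
        exact mul_le_mul_of_nonneg_left (hk _) (by positivity)
    _ = c * (∑ x, ‖f x‖) ^ 2 := by
        rw [sq, sum_mul_sum, mul_sum]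
        exact sum_congr rfl fun x _ => by rw [mul_sum]; exact sum_congr rfl fun y _ => by ring

lemma sum_indicator_one_eq_ncard {G : Type*} [Fintype G] (S : Set G) :
    ∑ x, S.indicator (fun _ => (1 : ℝ)) x = S.ncard := by
  classical
  simp [Set.indicator_apply, Set.ncard_eq_toFinset_card']

lemma sum_abs_le_ncard {G : Type*} [Fintype G] {φ : G → ℝ} {S : Set G}
    (hφ : ∀ x, |φ x| ≤ 1) (hsupp : ∀ x, φ x ≠ 0 → x ∈ S) :
    ∑ x, |φ x| ≤ S.ncard := by
  rw [← sum_indicator_one_eq_ncard]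
  refine sum_le_sum fun x _ => ?_
  by_cases hx : x ∈ S
  · simpa [Set.indicator_of_mem hx] using hφ x
  · simp [Set.indicator_of_notMem hx, not_imp_comm.1 (hsupp x) hx]

lemma sum_norm_indicator_one {G : Type*} [Fintype G] (E : Set G) :
    ∑ x, ‖E.indicator (fun _ => (1 : ℂ)) x‖ = E.ncard := by
  simp only [norm_indicator_eq_indicator_norm, norm_one, sum_indicator_one_eq_ncard]

lemma sum_norm_sq_indicator_one {G : Type*} [Fintype G] (E : Set G) :
    ∑ x, ‖E.indicator (fun _ => (1 : ℂ)) x‖ ^ 2 = E.ncard := by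
  simp only [norm_indicator_eq_indicator_norm, norm_one, ← sum_indicator_one_eq_ncard]
  exact sum_congr rfl fun x _ => by by_cases hx : x ∈ E <;> simp [hx]

section Dyadic

variable {H : Type*} {P : ℝ → Set H}

lemma dyadic_rpow_mul_rpow {r₀ : ℝ} (hr₀ : 0 < r₀) (a n : ℝ) (m : ℕ) :
    (2 ^ m * r₀) ^ (-n) * (2 ^ (m + 1) * r₀) ^ a = 2 ^ a * r₀ ^ (a - n) * (2 ^ (a - n)) ^ m := by
  have h2 : (0 : ℝ) < 2 := two_pos
  rw [Real.mul_rpow (by positivity) hr₀.le, Real.mul_rpow (by positivity) hr₀.le,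
    ← Real.rpow_natCast, ← Real.rpow_natCast, ← Real.rpow_natCast, ← Real.rpow_mul h2.le,
    ← Real.rpow_mul h2.le, ← Real.rpow_mul h2.le, Real.rpow_sub hr₀, Real.rpow_neg hr₀.le]
  have : (2 : ℝ) ^ ((m + 1 : ℕ) * a) = 2 ^ a * 2 ^ ((m : ℝ) * a) := by
    rw [← Real.rpow_add h2]; push_cast; ring_nf
  have h' : (2 : ℝ) ^ ((a - n) * m) = 2 ^ ((m : ℝ) * a) * (2 ^ ((m : ℝ) * -n)) := by
    rw [← Real.rpow_add h2]; ring_nf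
  rw [this, h']
  field_simp

lemma exists_forall_mem_two_pow_mul [Finite H] (hmono : ∀ r r', 0 < r → r ≤ r' → P r ⊆ P r')
    (hcover : ∀ η, ∃ r, 0 < r ∧ η ∈ P r) {r₀ : ℝ} (hr₀ : 0 < r₀) :
    ∃ N : ℕ, ∀ η, η ∈ P (2 ^ N * r₀) := by
  have : Fintype H := Fintype.ofFinite H
  choose r hr hmem using hcover
  have hN : ∀ η, ∃ N : ℕ, r η ≤ 2 ^ N * r₀ := fun η =>
    let ⟨N, hN⟩ := pow_unbounded_of_one_lt (r η / r₀) one_lt_two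
    ⟨N, ((div_lt_iff₀ hr₀).1 hN).le⟩
  choose N hN using hN
  refine ⟨univ.sup N, fun η => hmono _ _ (hr η) ((hN η).trans ?_) (hmem η)⟩
  gcongr
  · norm_num
  · exact le_sup (mem_univ η)

lemma le_dyadic_majorant (hmono : ∀ r r', 0 < r → r ≤ r' → P r ⊆ P r') {r₀ C D n : ℝ}
    (hr₀ : 0 < r₀) (hC : 0 ≤ C) {F : H → ℝ} {η : H} (hnear : η ∈ P r₀ → F η ≤ D)
    (hfar : ∀ s, r₀ ≤ s → η ∉ P s → F η ≤ C * s ^ (-n)) :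
    ∀ N : ℕ, η ∈ P (2 ^ N * r₀) →
      F η ≤ D * (P r₀).indicator (fun _ => 1) η + C * ∑ m ∈ range N,
        (2 ^ m * r₀) ^ (-n) * (P (2 ^ (m + 1) * r₀)).indicator (fun _ => 1) η := by
  have hterm : ∀ m : ℕ, 0 ≤ (2 ^ m * r₀) ^ (-n) * (P (2 ^ (m + 1) * r₀)).indicator (fun _ => 1) η :=
    fun m => mul_nonneg (by positivity) (Set.indicator_nonneg (fun _ _ => zero_le_one) _)
  intro N
  induction N with
  | zero =>
    intro h
    rw [pow_zero, one_mul] at h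
    simpa [Set.indicator_of_mem h] using hnear h
  | succ N ih =>
    intro h
    rw [sum_range_succ, mul_add, ← add_assoc]
    by_cases hN : η ∈ P (2 ^ N * r₀)
    · exact (ih hN).trans (le_add_of_nonneg_right (mul_nonneg hC (hterm N)))
    · have hr₀N : r₀ ≤ 2 ^ N * r₀ := le_mul_of_one_le_left hr₀.le (one_le_pow₀ one_le_two)
      have hfar' : η ∉ P r₀ := fun h₀ => hN (hmono _ _ hr₀ hr₀N h₀)
      rw [Set.indicator_of_notMem hfar', Set.indicator_of_mem h, mul_zero, zero_add, mul_one]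
      exact (hfar _ hr₀N hN).trans
        (le_add_of_nonneg_left (mul_nonneg hC (sum_nonneg fun m _ => hterm m)))

lemma sum_mul_le_of_dyadic [Fintype H] (hmono : ∀ r r', 0 < r → r ≤ r' → P r ⊆ P r')
    (hcover : ∀ η, ∃ r, 0 < r ∧ η ∈ P r) {w F : H → ℝ} (hw : ∀ η, 0 ≤ w η)
    {r₀ A C D a n : ℝ} (hr₀ : 0 < r₀) (hA : 0 ≤ A) (hC : 0 ≤ C) (hD : 0 ≤ D) (han : a < n)
    (hball : ∀ r, 0 < r → ∑ η, (P r).indicator (fun _ => 1) η * w η ≤ A * r ^ a)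
    (hnear : ∀ η ∈ P r₀, F η ≤ D) (hfar : ∀ s, r₀ ≤ s → ∀ η ∉ P s, F η ≤ C * s ^ (-n)) :
    ∑ η, w η * F η ≤ (D * r₀ ^ a + 2 ^ a * C * r₀ ^ (a - n) * (1 - 2 ^ (a - n))⁻¹) * A := by
  obtain ⟨N, hN⟩ := exists_forall_mem_two_pow_mul hmono hcover hr₀
  set μ : ℝ → ℝ := fun r => ∑ η, (P r).indicator (fun _ => 1) η * w η
  have hq : (0 : ℝ) < 2 ^ (a - n) := by positivity
  have hq1 : (2 : ℝ) ^ (a - n) < 1 := Real.rpow_lt_one_of_one_lt_of_neg one_lt_two (by linarith)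
  calc ∑ η, w η * F η
      ≤ ∑ η, w η * (D * (P r₀).indicator (fun _ => 1) η + C * ∑ m ∈ range N,
          (2 ^ m * r₀) ^ (-n) * (P (2 ^ (m + 1) * r₀)).indicator (fun _ => 1) η) :=
        sum_le_sum fun η _ => mul_le_mul_of_nonneg_left (le_dyadic_majorant hmono hr₀ hC
          (hnear η) (fun s hs => hfar s hs η) N (hN η)) (hw η)
    _ = D * μ r₀ + C * ∑ m ∈ range N, (2 ^ m * r₀) ^ (-n) * μ (2 ^ (m + 1) * r₀) := by
        simp only [μ, mul_add, sum_add_distrib, mul_sum]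
        congr 1
        · exact sum_congr rfl fun η _ => by ring
        · rw [sum_comm]
          exact sum_congr rfl fun m _ => sum_congr rfl fun η _ => by ring
    _ ≤ D * (A * r₀ ^ a)
          + C * ∑ m ∈ range N, (2 ^ m * r₀) ^ (-n) * (A * (2 ^ (m + 1) * r₀) ^ a) := by
        gcongr with m
        · exact hball _ hr₀
        · exact hball _ (by positivity)
    _ = (D * r₀ ^ a + 2 ^ a * C * r₀ ^ (a - n) * ∑ m ∈ range N, (2 ^ (a - n)) ^ m) * A := by
        have hterm : ∀ m : ℕ, (2 ^ m * r₀) ^ (-n) * (A * (2 ^ (m + 1) * r₀) ^ a)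
            = A * 2 ^ a * r₀ ^ (a - n) * (2 ^ (a - n)) ^ m := by
          intro m
          rw [mul_left_comm, dyadic_rpow_mul_rpow hr₀]
          ring
        simp only [hterm, ← mul_sum]
        ring
    _ ≤ _ := by
        have hgeom : ∑ m ∈ range N, ((2 : ℝ) ^ (a - n)) ^ m ≤ (1 - 2 ^ (a - n))⁻¹ := by
          have h := geom_sum_Ico_le_of_lt_one (m := 0) (n := N) hq.le hq1
          rwa [← range_eq_Ico, pow_zero, one_div] at h
        gcongr

end Dyadic

lemma le_two_mul_rpow_mul_rpow_of_pos {S X Y s t : ℝ} (hs : 0 < s) (ht : 0 < t) (hX : 0 < X)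
    (hY : 0 < Y) (h : ∀ ρ, 0 < ρ → S ≤ X * ρ ^ s + Y * ρ ^ (-t)) :
    S ≤ 2 * X ^ (t / (s + t)) * Y ^ (s / (s + t)) := by
  have hst : s + t ≠ 0 := by positivity
  have hα : t / (s + t) = 1 - s / (s + t) := by field_simp; ring
  have hβ : s / (s + t) = 1 - t / (s + t) := by field_simp; ring
  set ρ := (Y / X) ^ (1 / (s + t))
  have hXρ : X * ρ ^ s = X ^ (t / (s + t)) * Y ^ (s / (s + t)) := by
    rw [← Real.rpow_mul (by positivity), one_div_mul_eq_div, Real.div_rpow hY.le hX.le, hα,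
      Real.rpow_sub hX, Real.rpow_one]
    ring
  have hYρ : Y * ρ ^ (-t) = X ^ (t / (s + t)) * Y ^ (s / (s + t)) := by
    rw [← Real.rpow_mul (by positivity), one_div_mul_eq_div, neg_div, Real.rpow_neg (by positivity),
      Real.div_rpow hY.le hX.le, hβ, Real.rpow_sub hY, Real.rpow_one]
    field_simp
  have := h ρ (by positivity)
  linarith

lemma le_two_mul_rpow_mul_rpow {S X Y s t : ℝ} (hs : 0 < s) (ht : 0 < t) (hX : 0 ≤ X)
    (hY : 0 ≤ Y) (h : ∀ ρ, 0 < ρ → S ≤ X * ρ ^ s + Y * ρ ^ (-t)) :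
    S ≤ 2 * X ^ (t / (s + t)) * Y ^ (s / (s + t)) := by
  set f : ℝ → ℝ := fun ε => 2 * (X + ε) ^ (t / (s + t)) * (Y + ε) ^ (s / (s + t))
  have hf : Tendsto f (𝓝[>] 0) (𝓝 (f 0)) := by
    refine ContinuousAt.tendsto ?_ |>.mono_left nhdsWithin_le_nhds
    refine (continuousAt_const.mul ?_).mul ?_ <;>
      exact (continuousAt_const.add continuousAt_id).rpow_const (Or.inr (by positivity))
  simp only [f, add_zero] at hf
  refine ge_of_tendsto hf (eventually_mem_nhdsWithin.mono fun ε (hε : 0 < ε) => ?_)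
  refine le_two_mul_rpow_mul_rpow_of_pos hs ht (by positivity) (by positivity) fun ρ hρ => ?_
  refine (h ρ hρ).trans (add_le_add ?_ ?_) <;> gcongr <;> linarith

lemma rpow_half_le_of_le_balanced {S c P A B M θ : ℝ} (hc : 1 ≤ c) (hP : 0 ≤ P) (hA : 0 ≤ A)
    (hB : 0 ≤ B) (hM : 0 ≤ M) (hθ0 : 0 ≤ θ) (hθ1 : θ ≤ 1)
    (h : S ≤ 2 * (c * P * A * M) ^ (1 - θ) * (2 * B * M ^ 2) ^ θ) :
    S ^ (1 / 2 : ℝ) ≤ 2 * c * P ^ ((1 - θ) / 2) * A ^ ((1 - θ) / 2) * B ^ (θ / 2) *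
      M ^ ((1 + θ) / 2) := by
  have hsq : ∀ {x : ℝ} (y : ℝ), 0 ≤ x → (x ^ (y / 2)) ^ 2 = x ^ y := fun y hx => by
    rw [← Real.rpow_mul_natCast hx]; norm_num
  have hM2 : M ^ (1 - θ) * (M ^ 2) ^ θ = M ^ (1 + θ) := by
    rw [← Real.rpow_natCast, ← Real.rpow_mul hM, ← Real.rpow_add' hM (by norm_num; linarith)]
    ring_nf
  rw [← Real.sqrt_eq_rpow, Real.sqrt_le_left (by positivity)]
  calc S ≤ 2 * (c * P * A * M) ^ (1 - θ) * (2 * B * M ^ 2) ^ θ := h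
    _ = (2 * c ^ (1 - θ) * 2 ^ θ) * (P ^ (1 - θ) * A ^ (1 - θ) * B ^ θ * M ^ (1 + θ)) := by
        rw [← hM2, Real.mul_rpow (by positivity) hM, Real.mul_rpow (by positivity) hA,
          Real.mul_rpow (by positivity) hP, Real.mul_rpow (by positivity) (by positivity),
          Real.mul_rpow (by positivity) hB]
        ring
    _ ≤ (2 * c) ^ 2 * (P ^ (1 - θ) * A ^ (1 - θ) * B ^ θ * M ^ (1 + θ)) := by
        have hcθ : c ^ (1 - θ) ≤ c := Real.rpow_le_self_of_one_le hc (by linarith)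
        have h2θ : (2 : ℝ) ^ θ ≤ 2 := Real.rpow_le_self_of_one_le one_le_two hθ1
        gcongr
        nlinarith [Real.rpow_nonneg (zero_le_one.trans hc) (1 - θ)]
    _ = _ := by
        simp only [mul_pow, hsq _ hP, hsq _ hA, hsq _ hB, hsq _ hM]
        ring

-- `2 ^ n` comes from the ball of radius `1 / ρ`, `2 ^ a / (1 - 2 ^ (a - n))` from the dyadic
-- shells around it.
noncomputable def lpConst (n a : ℝ) : ℝ := 2 ^ n + 2 ^ a * (1 - 2 ^ (a - n))⁻¹

lemma lpConst_pos {n a : ℝ} (han : a < n) : 0 < lpConst n a := by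
  have hq : (2 : ℝ) ^ (a - n) < 1 := Real.rpow_lt_one_of_one_lt_of_neg one_lt_two (by linarith)
  rw [lpConst]
  have : 0 < (1 : ℝ) - 2 ^ (a - n) := by linarith
  positivity

lemma one_le_lpConst {n a : ℝ} (hn : 0 ≤ n) (han : a < n) : 1 ≤ lpConst n a := by
  have hq : (2 : ℝ) ^ (a - n) < 1 := Real.rpow_lt_one_of_one_lt_of_neg one_lt_two (by linarith)
  have : 0 < (2 : ℝ) ^ a * (1 - 2 ^ (a - n))⁻¹ := mul_pos (by positivity) (inv_pos.2 (by linarith))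
  rw [lpConst]
  linarith [Real.one_le_rpow one_le_two hn]

namespace DualPairing

variable {G H : Type*} [AddCommGroup G] [Fintype G]

def fourier (e : G → H → ℂ) (f : G → ℂ) (ξ : H) : ℂ := ∑ x, f x * e (-x) ξ

def invFourier [Fintype H] (e : G → H → ℂ) (g : H → ℂ) (x : G) : ℂ := ∑ ξ, g ξ * e x ξ

variable {e : G → H → ℂ}

lemma norm_fourier_le (hnorm : ∀ x ξ, ‖e x ξ‖ = 1) (f : G → ℂ) (ξ : H) :
    ‖fourier e f ξ‖ ≤ ∑ x, ‖f x‖ :=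
  (norm_sum_le _ _).trans_eq <| sum_congr rfl fun x _ => by rw [norm_mul, hnorm, mul_one]

lemma mul_conj_fourier (hmul : ∀ x y ξ, e (x + y) ξ = e x ξ * e y ξ)
    (hnorm : ∀ x ξ, ‖e x ξ‖ = 1) (f : G → ℂ) (ξ : H) :
    fourier e f ξ * conj (fourier e f ξ) = ∑ x, ∑ y, f x * conj (f y) * e (y - x) ξ := by
  rw [fourier, map_sum, sum_mul_sum]
  refine sum_congr rfl fun x _ => sum_congr rfl fun y _ => ?_
  rw [map_mul, ← map_neg_eq_conj_of_norm_eq_one (hmul · · ξ) (hnorm · ξ), neg_neg,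
    sub_eq_neg_add, hmul]
  ring

variable [Fintype H]

lemma sum_mul_norm_fourier_sq (hmul : ∀ x y ξ, e (x + y) ξ = e x ξ * e y ξ)
    (hnorm : ∀ x ξ, ‖e x ξ‖ = 1) (g : H → ℂ) (f : G → ℂ) :
    ∑ ξ, g ξ * (‖fourier e f ξ‖ : ℂ) ^ 2
      = ∑ x, ∑ y, f x * conj (f y) * invFourier e g (y - x) := by
  simp_rw [← Complex.mul_conj', mul_conj_fourier hmul hnorm, invFourier, mul_sum]
  rw [sum_comm]
  refine sum_congr rfl fun x _ => ?_
  rw [sum_comm]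
  exact sum_congr rfl fun y _ => sum_congr rfl fun ξ _ => by ring

lemma sum_norm_fourier_sq [DecidableEq G] (hmul : ∀ x y ξ, e (x + y) ξ = e x ξ * e y ξ)
    (hnorm : ∀ x ξ, ‖e x ξ‖ = 1)
    (horth : ∀ x : G, ∑ ξ : H, e x ξ = if x = 0 then (Fintype.card G : ℂ) else 0)
    (f : G → ℂ) :
    ∑ ξ, ‖fourier e f ξ‖ ^ 2 = Fintype.card G * ∑ x, ‖f x‖ ^ 2 := by
  have h := sum_mul_norm_fourier_sq hmul hnorm 1 f
  simp only [Pi.one_apply, one_mul, invFourier, horth, sub_eq_zero, mul_ite, mul_zero,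
    sum_ite_eq', mem_univ, if_true] at h
  apply Complex.ofReal_injective
  push_cast
  rw [h, mul_sum]
  exact sum_congr rfl fun x _ => by rw [← Complex.mul_conj']; ring

lemma re_sum_sum_mul_conj_mul_invFourier_le [DecidableEq G]
    (hmul : ∀ x y ξ, e (x + y) ξ = e x ξ * e y ξ) (hnorm : ∀ x ξ, ‖e x ξ‖ = 1)
    (horth : ∀ x : G, ∑ ξ : H, e x ξ = if x = 0 then (Fintype.card G : ℂ) else 0)
    {g : H → ℂ} {c : ℝ} (hg : ∀ ξ, ‖g ξ‖ ≤ c) (f : G → ℂ) :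
    (∑ x, ∑ y, f x * conj (f y) * invFourier e g (y - x)).re
      ≤ c * Fintype.card G * ∑ x, ‖f x‖ ^ 2 := by
  rw [← sum_mul_norm_fourier_sq hmul hnorm, Complex.re_sum, mul_assoc,
    ← sum_norm_fourier_sq hmul hnorm horth, mul_sum]
  refine sum_le_sum fun ξ _ => ?_
  rw [← Complex.ofReal_pow, Complex.re_mul_ofReal]
  exact mul_le_mul_of_nonneg_right ((Complex.re_le_norm _).trans (hg ξ)) (by positivity)

variable [AddCommGroup H]

lemma invFourier_conv_fourier [DecidableEq G] (hmul : ∀ x y ξ, e (x + y) ξ = e x ξ * e y ξ)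
    (hmul' : ∀ x ξ η, e x (ξ + η) = e x ξ * e x η) (hnorm : ∀ x ξ, ‖e x ξ‖ = 1)
    (horth : ∀ x : G, ∑ ξ : H, e x ξ = if x = 0 then (Fintype.card G : ℂ) else 0)
    (w : H → ℂ) (φ : G → ℂ) (z : G) :
    invFourier e (fun ξ => (Fintype.card G : ℂ)⁻¹ * ∑ η, w η * fourier e φ (ξ - η)) z
      = φ z * invFourier e w z := by
  have hchar : ∀ (u : G) (ξ η : H), e (-u) (ξ - η) * e z ξ = e (z - u) ξ * e u η := by
    intro u ξ η
    have hneg : e (-u) (-η) = e u η := by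
      rw [map_neg_eq_conj_of_norm_eq_one (hmul · · _) (hnorm · _),
        map_neg_eq_conj_of_norm_eq_one (hmul' u) (hnorm u), Complex.conj_conj]
    rw [sub_eq_add_neg ξ, hmul', hneg, sub_eq_neg_add, hmul]
    ring
  calc invFourier e (fun ξ => (Fintype.card G : ℂ)⁻¹ * ∑ η, w η * fourier e φ (ξ - η)) z
      = (Fintype.card G : ℂ)⁻¹ * ∑ η, ∑ u, w η * φ u * e u η * ∑ ξ, e (z - u) ξ := by
        simp_rw [invFourier, fourier, mul_assoc, ← mul_sum]
        congr 1
        simp_rw [mul_sum, sum_mul]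
        rw [sum_comm]
        refine sum_congr rfl fun η _ => ?_
        rw [sum_comm]
        refine sum_congr rfl fun u _ => sum_congr rfl fun ξ _ => ?_
        linear_combination w η * φ u * hchar u ξ η
    _ = φ z * invFourier e w z := by
        simp only [horth, sub_eq_zero, mul_ite, mul_zero, eq_comm (a := z), sum_ite_eq',
          mem_univ, if_true, invFourier, mul_sum]
        exact sum_congr rfl fun η _ => by field_simp

lemma sum_weight_mul_norm_fourier_cutoff_le {BG : ℝ → Set G} {BH : ℝ → Set H} {φ : G → ℝ}
    {w : H → ℝ} {n a C₁ C₂ A ρ : ℝ} (hnorm : ∀ x ξ, ‖e x ξ‖ = 1)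
    (hBHmono : ∀ ρ ρ' : ℝ, 0 < ρ → ρ ≤ ρ' → BH ρ ⊆ BH ρ')
    (hBHcover : ∀ ξ : H, ∃ ρ : ℝ, 0 < ρ ∧ ξ ∈ BH ρ)
    (hC₁ : 0 ≤ C₁) (hC₂ : 0 ≤ C₂) (hA : 0 ≤ A) (han : a < n) (hρ : 0 < ρ)
    (hGcount : ((BG (2 * ρ)).ncard : ℝ) ≤ C₁ * (2 * ρ) ^ n)
    (hφsupp : ∀ x : G, φ x ≠ 0 → x ∈ BG (2 * ρ)) (hφle1 : ∀ x, |φ x| ≤ 1)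
    (hdecay : ∀ s : ℝ, 1 / ρ ≤ s → ∀ ξ : H, -ξ ∉ BH s →
      ‖∑ x : G, (φ x : ℂ) * e (-x) ξ‖ ≤ C₂ * s ^ (-n))
    (hw : ∀ ξ : H, 0 ≤ w ξ)
    (hball : ∀ ρ : ℝ, 0 < ρ → ∀ ξ : H,
      ∑ η : H, Set.indicator (BH ρ) (fun _ => (1 : ℝ)) (η - ξ) * w η ≤ A * ρ ^ a) (ξ : H) :
    ∑ η, w η * ‖fourier e (fun x => (φ x : ℂ)) (ξ - η)‖
      ≤ lpConst n a * (C₁ + C₂) * A * ρ ^ (n - a) := by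
  have hdyadic := sum_mul_le_of_dyadic (P := fun r => (· - ξ) ⁻¹' BH r) (r₀ := ρ⁻¹)
    (F := fun η => ‖fourier e (fun x => (φ x : ℂ)) (ξ - η)‖) (D := C₁ * (2 * ρ) ^ n)
    (fun r r' hr hrr' => Set.preimage_mono (hBHmono r r' hr hrr'))
    (fun η => hBHcover (η - ξ)) hw (inv_pos.2 hρ) hA hC₂ (by positivity) han
    (fun r hr => hball r hr ξ)
    (fun η _ => ((norm_fourier_le hnorm _ _).trans_eq (by simp)).trans
      ((sum_abs_le_ncard hφle1 hφsupp).trans hGcount))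
    (fun s hs η hη => hdecay s (by rwa [one_div]) (ξ - η) (by rwa [neg_sub]))
  have hρna : ρ ^ n * ρ⁻¹ ^ a = ρ ^ (n - a) := by
    rw [Real.inv_rpow hρ.le, ← Real.rpow_neg hρ.le, ← Real.rpow_add hρ, sub_eq_add_neg]
  have hρan : ρ⁻¹ ^ (a - n) = ρ ^ (n - a) := by
    rw [Real.inv_rpow hρ.le, ← Real.rpow_neg hρ.le, neg_sub]
  have hq : 0 ≤ (2 : ℝ) ^ a * (1 - 2 ^ (a - n))⁻¹ := mul_nonneg (by positivity)
    (inv_nonneg.2 (sub_nonneg.2 (Real.rpow_le_one_of_one_le_of_nonpos one_le_two (by linarith))))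
  have hslack := mul_nonneg (add_nonneg (mul_nonneg (Real.rpow_nonneg zero_le_two n) hC₂)
    (mul_nonneg hq hC₁)) (mul_nonneg hA (Real.rpow_nonneg hρ.le (n - a)))
  refine hdyadic.trans ?_
  have hnear : C₁ * (2 * ρ) ^ n * ρ⁻¹ ^ a = 2 ^ n * C₁ * ρ ^ (n - a) := by
    rw [Real.mul_rpow zero_le_two hρ.le, ← hρna]; ring
  rw [hnear, hρan, lpConst]
  linarith

theorem sum_weight_mul_norm_fourier_sq_le [DecidableEq G] {BG : ℝ → Set G} {BH : ℝ → Set H}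
    {φ : G → ℝ} {w : H → ℝ} {n a b C₁ C₂ A B ρ : ℝ}
    (hmul : ∀ x y ξ, e (x + y) ξ = e x ξ * e y ξ) (hmul' : ∀ x ξ η, e x (ξ + η) = e x ξ * e x η)
    (hnorm : ∀ x ξ, ‖e x ξ‖ = 1)
    (horth : ∀ x : G, ∑ ξ : H, e x ξ = if x = 0 then (Fintype.card G : ℂ) else 0)
    (hBHmono : ∀ ρ ρ' : ℝ, 0 < ρ → ρ ≤ ρ' → BH ρ ⊆ BH ρ')
    (hBHcover : ∀ ξ : H, ∃ ρ : ℝ, 0 < ρ ∧ ξ ∈ BH ρ)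
    (hC₁ : 0 ≤ C₁) (hC₂ : 0 ≤ C₂) (hA : 0 ≤ A) (hB : 0 ≤ B) (han : a < n) (hρ : 0 < ρ)
    (hGcount : ((BG (2 * ρ)).ncard : ℝ) ≤ C₁ * (2 * ρ) ^ n)
    (hφ1 : ∀ x ∈ BG ρ, φ x = 1) (hφsupp : ∀ x : G, φ x ≠ 0 → x ∈ BG (2 * ρ))
    (hφle1 : ∀ x, |φ x| ≤ 1)
    (hdecay : ∀ s : ℝ, 1 / ρ ≤ s → ∀ ξ : H, -ξ ∉ BH s →
      ‖∑ x : G, (φ x : ℂ) * e (-x) ξ‖ ≤ C₂ * s ^ (-n))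
    (hw : ∀ ξ : H, 0 ≤ w ξ)
    (hball : ∀ ρ : ℝ, 0 < ρ → ∀ ξ : H,
      ∑ η : H, Set.indicator (BH ρ) (fun _ => (1 : ℝ)) (η - ξ) * w η ≤ A * ρ ^ a)
    (hK : ∀ x : G, x ∉ BG ρ → ‖∑ ξ : H, (w ξ : ℂ) * e x ξ‖ ≤ B * ρ ^ (-b / 2))
    (f : G → ℂ) :
    ∑ ξ, w ξ * ‖fourier e f ξ‖ ^ 2
      ≤ (lpConst n a * (C₁ + C₂) * A * ∑ x, ‖f x‖ ^ 2) * ρ ^ (n - a)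
        + (2 * B * (∑ x, ‖f x‖) ^ 2) * ρ ^ (-(b / 2)) := by
  set K := invFourier e (fun ξ => (w ξ : ℂ))
  set c := lpConst n a * (C₁ + C₂) * A * ρ ^ (n - a)
  set g : H → ℂ := fun ξ =>
    (Fintype.card G : ℂ)⁻¹ * ∑ η, (w η : ℂ) * fourier e (fun x => (φ x : ℂ)) (ξ - η)
  have hcard : (0 : ℝ) < Fintype.card G := Nat.cast_pos.2 Fintype.card_pos
  have hg : ∀ ξ, ‖g ξ‖ ≤ c / Fintype.card G := by
    intro ξ
    rw [norm_mul, norm_inv, Complex.norm_natCast, inv_mul_le_iff₀ hcard,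
      mul_div_cancel₀ _ hcard.ne']
    refine (norm_sum_le _ _).trans (le_of_eq_of_le (sum_congr rfl fun η _ => ?_)
      (sum_weight_mul_norm_fourier_cutoff_le hnorm hBHmono hBHcover hC₁ hC₂ hA han hρ hGcount
        hφsupp hφle1 hdecay hw hball ξ))
    rw [norm_mul, Complex.norm_real, Real.norm_of_nonneg (hw η)]
  have hnear : ∀ z, invFourier e g z = φ z * K z :=
    invFourier_conv_fourier hmul hmul' hnorm horth _ _
  have hfar : ∀ z, ‖(1 - (φ z : ℂ)) * K z‖ ≤ 2 * B * ρ ^ (-(b / 2)) := by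
    intro z
    by_cases hz : z ∈ BG ρ
    · simp [hφ1 z hz]
      positivity
    · rw [norm_mul, ← neg_div, mul_assoc]
      refine mul_le_mul ((norm_sub_le _ _).trans ?_) (hK z hz) (norm_nonneg _) zero_le_two
      rw [norm_one, Complex.norm_real, Real.norm_eq_abs]
      linarith [hφle1 z]
  have hS : ((∑ ξ, w ξ * ‖fourier e f ξ‖ ^ 2 : ℝ) : ℂ)
      = ∑ x, ∑ y, f x * conj (f y) * K (y - x) := by
    push_cast
    exact sum_mul_norm_fourier_sq hmul hnorm _ f
  have hsplit : ∑ ξ, w ξ * ‖fourier e f ξ‖ ^ 2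
      = (∑ x, ∑ y, f x * conj (f y) * invFourier e g (y - x)).re
        + (∑ x, ∑ y, f x * conj (f y) * ((1 - (φ (y - x) : ℂ)) * K (y - x))).re := by
    rw [← Complex.add_re, ← sum_add_distrib, ← Complex.ofReal_re (∑ ξ, _), hS]
    refine congrArg _ (sum_congr rfl fun x _ => ?_)
    rw [← sum_add_distrib]
    exact sum_congr rfl fun y _ => by rw [hnear]; ring
  rw [hsplit]
  refine add_le_add ((re_sum_sum_mul_conj_mul_invFourier_le hmul hnorm horth hg f).trans_eq ?_)
    ((Complex.re_le_norm _).trans ((norm_sum_sum_mul_conj_le _ _ hfar).trans_eq (by ring)))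
  field_simp
  ring

end DualPairing

open DualPairing in
theorem stmt_2 (n a : ℝ) (han : a < n) :
    ∃ C : ℝ, 0 < C ∧
      ∀ b : ℝ, 0 < b → b ≤ a →
      ∀ C₁ C₂ C₃ A B : ℝ, 0 ≤ C₁ → 0 ≤ C₂ → 0 ≤ C₃ → 0 ≤ A → 0 ≤ B →
      ∀ (G H : Type) [AddCommGroup G] [Fintype G] [DecidableEq G]
        [AddCommGroup H] [Fintype H]
        (e : G → H → ℂ) (BG : ℝ → Set G) (BH : ℝ → Set H)
        (φ : ℝ → G → ℝ) (w : H → ℝ),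
        (∀ (x y : G) (ξ : H), e (x + y) ξ = e x ξ * e y ξ) →
        (∀ (x : G) (ξ η : H), e x (ξ + η) = e x ξ * e x η) →
        (∀ (x : G) (ξ : H), ‖e x ξ‖ = 1) →
        (∀ x : G, ∑ ξ : H, e x ξ = if x = 0 then (Fintype.card G : ℂ) else 0) →
        (∀ ρ ρ' : ℝ, 0 < ρ → ρ ≤ ρ' → BG ρ ⊆ BG ρ') →
        (∀ (ρ : ℝ) (x : G), x ∈ BG ρ → -x ∈ BG ρ) →
        (∀ x : G, ∃ ρ : ℝ, 0 < ρ ∧ x ∈ BG ρ) →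
        (∀ ρ ρ' : ℝ, 0 < ρ → ρ ≤ ρ' → BH ρ ⊆ BH ρ') →
        (∀ (ρ : ℝ) (ξ : H), ξ ∈ BH ρ → -ξ ∈ BH ρ) →
        (∀ ξ : H, ∃ ρ : ℝ, 0 < ρ ∧ ξ ∈ BH ρ) →
        (∀ ρ : ℝ, 0 < ρ → ((BG ρ).ncard : ℝ) ≤ C₁ * ρ ^ n) →
        (∀ ρ : ℝ, 0 < ρ → ∀ x ∈ BG ρ, φ ρ x = 1) →
        (∀ ρ : ℝ, 0 < ρ → ∀ x : G, φ ρ x ≠ 0 → x ∈ BG (2 * ρ)) →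
        (∀ (ρ : ℝ) (x : G), |φ ρ x| ≤ 1) →
        (∀ ρ : ℝ, 0 < ρ → ∀ s : ℝ, 1 / ρ ≤ s → ∀ ξ : H, -ξ ∉ BH s →
          ‖∑ x : G, (φ ρ x : ℂ) * e (-x) ξ‖ ≤ C₂ * s ^ (-n)) →
        (∀ ρ : ℝ, 0 < ρ →
          (Fintype.card G : ℝ)⁻¹ *
              ∑ ξ : H, ‖∑ x : G, (φ ρ x : ℂ) * e (-x) ξ‖ ≤ C₃) →
        (∀ ξ : H, 0 ≤ w ξ) →
        (∀ ρ : ℝ, 0 < ρ → ∀ ξ : H,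
          ∑ η : H, Set.indicator (BH ρ) (fun _ => (1 : ℝ)) (η - ξ) * w η ≤ A * ρ ^ a) →
        (∀ ρ : ℝ, 0 < ρ → ∀ x : G, x ∉ BG ρ →
          ‖∑ ξ : H, (w ξ : ℂ) * e x ξ‖ ≤ B * ρ ^ (-b / 2)) →
        ∀ E : Set G,
          (∑ ξ : H, w ξ *
              ‖∑ x : G, Set.indicator E (fun _ => (1 : ℂ)) x * e (-x) ξ‖ ^ 2)
              ^ ((1 : ℝ) / 2)
            ≤ C * (C₁ + C₂) ^ ((1 - 2 * (n - a) / (2 * (n - a) + b)) / 2) *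
                A ^ ((1 - 2 * (n - a) / (2 * (n - a) + b)) / 2) *
                B ^ ((2 * (n - a) / (2 * (n - a) + b)) / 2) *
                (E.ncard : ℝ) ^ ((4 * (n - a) + b) / (4 * (n - a) + 2 * b)) := by
  refine ⟨2 * lpConst n a, mul_pos two_pos (lpConst_pos han), ?_⟩
  intro b hb hba C₁ C₂ _ A B hC₁ hC₂ _ hA hB G H _ _ _ _ _ e BG BH φ w hmul hmul' hnorm horth
    _ _ _ hBHmono _ hBHcover hGcount hφ1 hφsupp hφle1 hdecay _ hw hball hK E
  have hs : 0 < n - a := sub_pos.2 han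
  have hc := lpConst_pos han
  have hbalance := le_two_mul_rpow_mul_rpow (X := lpConst n a * (C₁ + C₂) * A * E.ncard)
    (Y := 2 * B * E.ncard ^ 2) hs (half_pos hb) (by positivity) (by positivity)
    fun ρ hρ => by
      simpa only [sum_norm_indicator_one, sum_norm_sq_indicator_one] using
        sum_weight_mul_norm_fourier_sq_le hmul hmul' hnorm horth hBHmono hBHcover hC₁ hC₂ hA hB
          han hρ (hGcount _ (by positivity)) (hφ1 ρ hρ) (hφsupp ρ hρ) (hφle1 ρ) (hdecay ρ hρ) hw
          hball (hK ρ hρ) (E.indicator fun _ => 1)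
  have hθ : (n - a) / (n - a + b / 2) = 2 * (n - a) / (2 * (n - a) + b) := by
    field_simp
  have h1θ : b / 2 / (n - a + b / 2) = 1 - 2 * (n - a) / (2 * (n - a) + b) := by
    field_simp; ring
  have hexp : (4 * (n - a) + b) / (4 * (n - a) + 2 * b)
      = (1 + 2 * (n - a) / (2 * (n - a) + b)) / 2 := by
    field_simp; ring
  rw [hθ, h1θ] at hbalance
  rw [hexp]
  exact rpow_half_le_of_le_balanced (one_le_lpConst (by linarith) han) (by linarith) hA hB
    (Nat.cast_nonneg _) (by positivity) (div_le_one_of_le₀ (by linarith) (by positivity)) hbalance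
end

section
/- Let (G, {B^G_ρ}, {B^{Ĝ}_ρ}, {φ_ρ}) be a Littlewood-Paley system satisfying m(B^G_ρ(0)) ≤ C₁ρⁿ and the Fourier decay condition (F) with constant C₂, and let μ be a measure on Ĝ with μ(B^{Ĝ}_ρ(ξ)) ≤ Aρ^a for all ξ and ρ, where 0 < a < n. Define μ₁ by μ̌₁ = φ_ρ · μ̌ (equivalently μ₁ = φ̂_ρ ∗ μ). Then ‖μ₁‖_{L^∞(Ĝ)} ≤ 2ⁿ (C₁ + (2^{n-a} − 1)^{-1} C₂) A ρ^{n-a}. -/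
/-! On `H`, cut the convolution into the ball `B(1/ρ)` around `ξ` and the dyadic shells
`B(2^(k+1)/ρ) \ B(2^k/ρ)`. On the ball the kernel is bounded by `|B^G(2ρ)| ≤ C₁ (2ρ)^n` and
`w` has mass `≤ A ρ^(-a)`; on the `k`-th shell (F) bounds the kernel by `C₂ (2^k/ρ)^(-n)` and
`w` has mass `≤ A (2^(k+1)/ρ)^a`. As `a < n`, the shell terms form a geometric series of ratio
`2^(a-n)`, which sums to `2^n (2^(n-a) - 1)⁻¹ C₂ A ρ^(n-a)`. -/

open Finset

theorem norm_sum_le_ncard_of_norm_le_one {α E : Type*} [Fintype α] [SeminormedAddCommGroup E]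
    (f : α → E) (S : Set α) (hf : ∀ x, ‖f x‖ ≤ 1) (hS : ∀ x, f x ≠ 0 → x ∈ S) :
    ‖∑ x, f x‖ ≤ S.ncard := by
  classical
  calc ‖∑ x, f x‖ = ‖∑ x ∈ S.toFinset, f x‖ := by
        refine congrArg _ (sum_subset (subset_univ _) fun x _ hx => ?_).symm
        by_contra h
        exact hx (Set.mem_toFinset.2 (hS x h))
    _ ≤ ∑ x ∈ S.toFinset, ‖f x‖ := norm_sum_le _ _
    _ ≤ ∑ x ∈ S.toFinset, 1 := sum_le_sum fun x _ => hf x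
    _ = S.ncard := by simp [Set.ncard_eq_toFinset_card']

theorem sum_rpow_dyadic_le {r₀ a n : ℝ} (hr₀ : 0 < r₀) (han : a < n) (K : ℕ) :
    ∑ k ∈ range K, (2 ^ k * r₀) ^ (-n) * (2 ^ (k + 1) * r₀) ^ a
      ≤ 2 ^ n * (2 ^ (n - a) - 1)⁻¹ * r₀ ^ (a - n) := by
  set q : ℝ := 2 ^ (a - n)
  have hq0 : 0 < q := by positivity
  have hq1 : q < 1 := Real.rpow_lt_one_of_one_lt_of_neg one_lt_two (by linarith)
  have hterm : ∀ k : ℕ, (2 ^ k * r₀) ^ (-n) * (2 ^ (k + 1) * r₀) ^ a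
      = 2 ^ a * r₀ ^ (a - n) * q ^ k := by
    intro k
    have h2k : (0 : ℝ) < 2 ^ k * r₀ := by positivity
    rw [pow_succ', mul_assoc, Real.mul_rpow zero_le_two h2k.le, mul_left_comm,
      ← Real.rpow_add h2k, neg_add_eq_sub, Real.mul_rpow (by positivity) hr₀.le,
      ← Real.rpow_pow_comm zero_le_two]
    ring
  have hgeom : 2 ^ a * (1 - q)⁻¹ = 2 ^ n * (2 ^ (n - a) - 1)⁻¹ := by
    have h : (2 : ℝ) ^ (n - a) * q = 1 := by
      rw [← Real.rpow_add two_pos]; norm_num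
    have hna : (2 : ℝ) ^ a * 2 ^ (n - a) = 2 ^ n := by
      rw [← Real.rpow_add two_pos]; ring_nf
    have h1 : (2 : ℝ) ^ (n - a) - 1 ≠ 0 := by
      rw [sub_ne_zero]; intro h'; rw [h', one_mul] at h; linarith
    have h2 : 1 - q ≠ 0 := by linarith
    field_simp
    linear_combination (1 - q) * hna + (2 : ℝ) ^ a * h
  have hgeom_sum : ∑ k ∈ range K, q ^ k ≤ (1 - q)⁻¹ := by
    have h := geom_sum_Ico_le_of_lt_one (m := 0) (n := K) hq0.le hq1
    rwa [← range_eq_Ico, pow_zero, one_div] at h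
  calc ∑ k ∈ range K, (2 ^ k * r₀) ^ (-n) * (2 ^ (k + 1) * r₀) ^ a
      = 2 ^ a * r₀ ^ (a - n) * ∑ k ∈ range K, q ^ k := by
        rw [mul_sum]; exact sum_congr rfl fun k _ => hterm k
    _ ≤ 2 ^ a * r₀ ^ (a - n) * (1 - q)⁻¹ :=
        mul_le_mul_of_nonneg_left hgeom_sum (by positivity)
    _ = 2 ^ n * (2 ^ (n - a) - 1)⁻¹ * r₀ ^ (a - n) := by
        rw [mul_right_comm, hgeom]

-- The shells of the dyadic decomposition are enlarged to full balls; every term stays nonnegative.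
theorem le_dyadic_majorant_s6 {H : Type*} (B : ℝ → Set H) (Φ : H → ℝ) {M C₂ n r₀ : ℝ}
    (hM : 0 ≤ M) (hC₂ : 0 ≤ C₂) (hr₀ : 0 < r₀) (hΦM : ∀ η, Φ η ≤ M)
    (hΦ : ∀ s, r₀ ≤ s → ∀ η, η ∉ B s → Φ η ≤ C₂ * s ^ (-n)) {η : H} :
    ∀ {K : ℕ}, η ∈ B (2 ^ K * r₀) →
      Φ η ≤ M * (B r₀).indicator (fun _ => 1) η
        + ∑ k ∈ range K, C₂ * (2 ^ k * r₀) ^ (-n) * (B (2 ^ (k + 1) * r₀)).indicator (fun _ => 1) η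
  | 0, hη => by simp_all
  | K + 1, hη => by
    rw [sum_range_succ, ← add_assoc]
    by_cases hK : η ∈ B (2 ^ K * r₀)
    · have hlast_nonneg :
          0 ≤ C₂ * (2 ^ K * r₀) ^ (-n) * (B (2 ^ (K + 1) * r₀)).indicator (fun _ => 1) η := by
        rw [Set.indicator_of_mem hη, mul_one]; positivity
      linarith [le_dyadic_majorant_s6 B Φ hM hC₂ hr₀ hΦM hΦ hK]
    · have hs : r₀ ≤ 2 ^ K * r₀ := le_mul_of_one_le_left hr₀.le (one_le_pow₀ one_le_two)
      have hind : ∀ s, 0 ≤ (B s).indicator (fun _ => (1 : ℝ)) η :=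
        fun s => Set.indicator_nonneg (fun _ _ => zero_le_one) η
      have hinner_nonneg : 0 ≤ M * (B r₀).indicator (fun _ => 1) η + ∑ k ∈ range K,
          C₂ * (2 ^ k * r₀) ^ (-n) * (B (2 ^ (k + 1) * r₀)).indicator (fun _ => 1) η :=
        add_nonneg (mul_nonneg hM (hind _))
          (sum_nonneg fun k _ => mul_nonneg (by positivity) (hind _))
      rw [Set.indicator_of_mem hη, mul_one]
      linarith [hΦ _ hs η hK]

theorem exists_forall_mem_dyadic {H : Type*} [Finite H] (B : ℝ → Set H)
    (hnest : ∀ s s' : ℝ, 0 < s → s ≤ s' → B s ⊆ B s') (hcov : ∀ η, ∃ s : ℝ, 0 < s ∧ η ∈ B s)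
    {r₀ : ℝ} (hr₀ : 0 < r₀) : ∃ K : ℕ, ∀ η, η ∈ B (2 ^ K * r₀) := by
  have hlim : Filter.Tendsto (fun K : ℕ => (2 : ℝ) ^ K * r₀) Filter.atTop Filter.atTop :=
    (tendsto_pow_atTop_atTop_of_one_lt one_lt_two).atTop_mul_const hr₀
  have hev : ∀ η, ∀ᶠ K in Filter.atTop, η ∈ B (2 ^ K * r₀) := fun η => by
    obtain ⟨s, hs, hη⟩ := hcov η
    exact (hlim.eventually_ge_atTop s).mono fun K hK => hnest s _ hs hK hη
  exact (Filter.eventually_all.2 hev).exists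

theorem sum_mul_le_of_dyadic_s6 {H : Type*} [Fintype H] (B : ℝ → Set H)
    (hnest : ∀ s s' : ℝ, 0 < s → s ≤ s' → B s ⊆ B s') (hcov : ∀ η, ∃ s : ℝ, 0 < s ∧ η ∈ B s)
    (w Φ : H → ℝ) (hw : ∀ η, 0 ≤ w η) {M C₂ A a n r₀ : ℝ}
    (hM : 0 ≤ M) (hC₂ : 0 ≤ C₂) (hA : 0 ≤ A) (hr₀ : 0 < r₀) (han : a < n)
    (hmass : ∀ s, 0 < s → ∑ η, (B s).indicator (fun _ => 1) η * w η ≤ A * s ^ a)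
    (hΦM : ∀ η, Φ η ≤ M) (hΦ : ∀ s, r₀ ≤ s → ∀ η, η ∉ B s → Φ η ≤ C₂ * s ^ (-n)) :
    ∑ η, w η * Φ η ≤ A * (M * r₀ ^ a + 2 ^ n * (2 ^ (n - a) - 1)⁻¹ * C₂ * r₀ ^ (a - n)) := by
  obtain ⟨K, hK⟩ := exists_forall_mem_dyadic B hnest hcov hr₀
  set mass : ℝ → ℝ := fun s => ∑ η, (B s).indicator (fun _ => 1) η * w η
  calc ∑ η, w η * Φ η
      ≤ ∑ η, w η * (M * (B r₀).indicator (fun _ => 1) η + ∑ k ∈ range K,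
          C₂ * (2 ^ k * r₀) ^ (-n) * (B (2 ^ (k + 1) * r₀)).indicator (fun _ => 1) η) :=
        sum_le_sum fun η _ => mul_le_mul_of_nonneg_left
          (le_dyadic_majorant_s6 B Φ hM hC₂ hr₀ hΦM hΦ (hK η)) (hw η)
    _ = M * mass r₀ + ∑ k ∈ range K, C₂ * (2 ^ k * r₀) ^ (-n) * mass (2 ^ (k + 1) * r₀) := by
        simp only [mass, mul_add, mul_sum, sum_add_distrib]
        rw [sum_comm]
        congr 1 <;> refine sum_congr rfl fun _ _ => ?_
        · ring
        · refine sum_congr rfl fun _ _ => ?_; ring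
    _ ≤ M * (A * r₀ ^ a)
          + ∑ k ∈ range K, C₂ * (2 ^ k * r₀) ^ (-n) * (A * (2 ^ (k + 1) * r₀) ^ a) := by
        gcongr with k
        · exact hmass _ hr₀
        · exact hmass _ (by positivity)
    _ = A * (M * r₀ ^ a + C₂ * ∑ k ∈ range K, (2 ^ k * r₀) ^ (-n) * (2 ^ (k + 1) * r₀) ^ a) := by
        rw [mul_add, mul_sum, mul_sum]
        exact congrArg₂ _ (by ring) (sum_congr rfl fun k _ => by ring)
    _ ≤ A * (M * r₀ ^ a + 2 ^ n * (2 ^ (n - a) - 1)⁻¹ * C₂ * r₀ ^ (a - n)) := by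
        have := mul_le_mul_of_nonneg_left (sum_rpow_dyadic_le hr₀ han K) hC₂
        gcongr A * (_ + ?_)
        linarith

theorem stmt_6_general (G H : Type*) [AddCommGroup G] [Fintype G] [AddCommGroup H] [Fintype H]
    (e : G → H → ℂ)
    (heu : ∀ (x : G) (ξ : H), ‖e x ξ‖ = 1)
    (BG : ℝ → Set G) (BH : ℝ → Set H)
    (hHnest : ∀ ρ ρ' : ℝ, 0 < ρ → ρ ≤ ρ' → BH ρ ⊆ BH ρ')
    (hHcov : ∀ ξ : H, ∃ ρ : ℝ, 0 < ρ ∧ ξ ∈ BH ρ)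
    (n a : ℝ) (han : a < n)
    (C₁ C₂ A : ℝ) (hC₁ : 0 ≤ C₁) (hC₂ : 0 ≤ C₂) (hA : 0 ≤ A)
    (hR : ∀ ρ : ℝ, 0 < ρ → ((BG ρ).ncard : ℝ) ≤ C₁ * ρ ^ n)
    (φ : ℝ → G → ℝ)
    (hφs : ∀ ρ : ℝ, 0 < ρ → ∀ x : G, φ ρ x ≠ 0 → x ∈ BG (2 * ρ))
    (hφb : ∀ (ρ : ℝ) (x : G), |φ ρ x| ≤ 1)
    (hF : ∀ ρ : ℝ, 0 < ρ → ∀ s : ℝ, 1 / ρ ≤ s → ∀ ξ : H, -ξ ∉ BH s →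
        ‖∑ x : G, (φ ρ x : ℂ) * e (-x) ξ‖ ≤ C₂ * s ^ (-n))
    (w : H → ℝ) (hw : ∀ ξ : H, 0 ≤ w ξ)
    (hRμ : ∀ ρ : ℝ, 0 < ρ → ∀ ξ : H,
        ∑ η : H, Set.indicator (BH ρ) (fun _ => (1 : ℝ)) (η - ξ) * w η ≤ A * ρ ^ a)
    (ρ : ℝ) (hρ : 0 < ρ) (ξ : H) :
    ‖∑ η : H, (w η : ℂ) * ∑ x : G, (φ ρ x : ℂ) * e (-x) (ξ - η)‖
      ≤ (2 : ℝ) ^ n * (C₁ + ((2 : ℝ) ^ (n - a) - 1)⁻¹ * C₂) * A * ρ ^ (n - a) := by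
  set Φ : H → ℝ := fun ζ => ‖∑ x : G, (φ ρ x : ℂ) * e (-x) ζ‖
  have hΦM : ∀ ζ, Φ ζ ≤ C₁ * (2 * ρ) ^ n := fun ζ =>
    (norm_sum_le_ncard_of_norm_le_one _ (BG (2 * ρ))
      (fun x => by rw [norm_mul, heu, mul_one, Complex.norm_real, Real.norm_eq_abs]; exact hφb ρ x)
      (fun x hx => hφs ρ hρ x (by exact_mod_cast left_ne_zero_of_mul hx))).trans
      (hR _ (by positivity))
  have hdyadic := sum_mul_le_of_dyadic_s6 (fun s => {η | η - ξ ∈ BH s})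
    (fun s s' hs hss' η hη => hHnest s s' hs hss' hη)
    (fun η => hHcov (η - ξ)) w (fun η => Φ (ξ - η)) hw
    (mul_nonneg hC₁ (by positivity)) hC₂ hA (one_div_pos.2 hρ) han (fun s hs => hRμ s hs ξ)
    (fun η => hΦM _)
    (fun s hs η hη => hF ρ hρ s hs (ξ - η) (by rwa [neg_sub]))
  calc ‖∑ η : H, (w η : ℂ) * ∑ x : G, (φ ρ x : ℂ) * e (-x) (ξ - η)‖
      ≤ ∑ η, w η * Φ (ξ - η) := by
        refine (norm_sum_le _ _).trans_eq (sum_congr rfl fun η _ => ?_)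
        rw [norm_mul, Complex.norm_real, Real.norm_of_nonneg (hw η)]
    _ ≤ A * (C₁ * (2 * ρ) ^ n * (1 / ρ) ^ a
          + 2 ^ n * (2 ^ (n - a) - 1)⁻¹ * C₂ * (1 / ρ) ^ (a - n)) := hdyadic
    _ = (2 : ℝ) ^ n * (C₁ + ((2 : ℝ) ^ (n - a) - 1)⁻¹ * C₂) * A * ρ ^ (n - a) := by
        have hρna : ρ ^ n * ρ ^ (-a) = ρ ^ (n - a) := by rw [← Real.rpow_add hρ, sub_eq_add_neg]
        have hρan : (ρ ^ (a - n))⁻¹ = ρ ^ (n - a) := by rw [← Real.rpow_neg hρ.le, neg_sub]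
        rw [Real.mul_rpow zero_le_two hρ.le, one_div, Real.inv_rpow hρ.le, Real.inv_rpow hρ.le,
          ← Real.rpow_neg hρ.le, hρan]
        linear_combination (A * C₁ * 2 ^ n) * hρna

theorem stmt_6 (G H : Type*) [AddCommGroup G] [Fintype G] [DecidableEq G] [AddCommGroup H] [Fintype H]
    (e : G → H → ℂ)
    (he1 : ∀ (x y : G) (ξ : H), e (x + y) ξ = e x ξ * e y ξ)
    (he2 : ∀ (x : G) (ξ η : H), e x (ξ + η) = e x ξ * e x η)
    (heu : ∀ (x : G) (ξ : H), ‖e x ξ‖ = 1)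
    (hinv : ∀ x : G, ∑ ξ : H, e x ξ = if x = 0 then (Fintype.card G : ℂ) else 0)
    (BG : ℝ → Set G) (BH : ℝ → Set H)
    (hGnest : ∀ ρ ρ' : ℝ, 0 < ρ → ρ ≤ ρ' → BG ρ ⊆ BG ρ')
    (hGsym : ∀ (ρ : ℝ) (x : G), x ∈ BG ρ → -x ∈ BG ρ)
    (hGcov : ∀ x : G, ∃ ρ : ℝ, 0 < ρ ∧ x ∈ BG ρ)
    (hHnest : ∀ ρ ρ' : ℝ, 0 < ρ → ρ ≤ ρ' → BH ρ ⊆ BH ρ')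
    (hHsym : ∀ (ρ : ℝ) (ξ : H), ξ ∈ BH ρ → -ξ ∈ BH ρ)
    (hHcov : ∀ ξ : H, ∃ ρ : ℝ, 0 < ρ ∧ ξ ∈ BH ρ)
    (n a : ℝ) (ha0 : 0 < a) (han : a < n)
    (C₁ C₂ A : ℝ) (hC₁ : 0 ≤ C₁) (hC₂ : 0 ≤ C₂) (hA : 0 ≤ A)
    (hR : ∀ ρ : ℝ, 0 < ρ → ((BG ρ).ncard : ℝ) ≤ C₁ * ρ ^ n)
    (φ : ℝ → G → ℝ)
    (hφ1 : ∀ ρ : ℝ, 0 < ρ → ∀ x ∈ BG ρ, φ ρ x = 1)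
    (hφs : ∀ ρ : ℝ, 0 < ρ → ∀ x : G, φ ρ x ≠ 0 → x ∈ BG (2 * ρ))
    (hφb : ∀ (ρ : ℝ) (x : G), |φ ρ x| ≤ 1)
    (hF : ∀ ρ : ℝ, 0 < ρ → ∀ s : ℝ, 1 / ρ ≤ s → ∀ ξ : H, -ξ ∉ BH s →
        ‖∑ x : G, (φ ρ x : ℂ) * e (-x) ξ‖ ≤ C₂ * s ^ (-n))
    (w : H → ℝ) (hw : ∀ ξ : H, 0 ≤ w ξ)
    (hRμ : ∀ ρ : ℝ, 0 < ρ → ∀ ξ : H,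
        ∑ η : H, Set.indicator (BH ρ) (fun _ => (1 : ℝ)) (η - ξ) * w η ≤ A * ρ ^ a)
    (ρ : ℝ) (hρ : 0 < ρ) (ξ : H) :
    ‖∑ η : H, (w η : ℂ) * ∑ x : G, (φ ρ x : ℂ) * e (-x) (ξ - η)‖
      ≤ (2 : ℝ) ^ n * (C₁ + ((2 : ℝ) ^ (n - a) - 1)⁻¹ * C₂) * A * ρ ^ (n - a) :=
  stmt_6_general G H e heu BG BH hHnest hHcov n a han C₁ C₂ A hC₁ hC₂ hA hR φ hφs hφb hF w hw hRμ ρ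
    hρ ξ
end

section
/- Let G = 𝔽_q^n with counting Haar measure on G and normalized (total mass 1) Haar measure on Ĝ ≅ 𝔽_q^n. Define balls B^G_ρ(x) = ∅ for ρ < 1, {x} for 1 ≤ ρ < q, and 𝔽_q^n for ρ ≥ q; and B^{Ĝ}_ρ(ξ) = ∅ for ρ < 1/q, {ξ} for 1/q ≤ ρ < 1, and 𝔽_q^n for ρ ≥ 1. Let φ_ρ := χ_{B^G_ρ(0)}. Then (G, {B^G_ρ}, {B^{Ĝ}_ρ}, {φ_ρ}) is a Littlewood-Paley system with constants C₁ = C₂ = C₃ = 1: i.e., m(B^G_ρ(0)) ≤ ρⁿ for all ρ > 0; |φ̂_ρ(ξ)| ≤ s^{-n} whenever -ξ ∉ B^{Ĝ}_s(0) and s ≥ 1/ρ; and ∫_{Ĝ}|φ̂_ρ| dm̂ ≤ 1. -/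
open scoped BigOperators

/-- The balls on `𝔽_q^n`. -/
def ballG (F : Type*) [Zero F] [Fintype F] (n : ℕ) (ρ : ℝ) : Set (Fin n → F) :=
  if ρ < 1 then ∅ else if ρ < (Fintype.card F : ℝ) then {0} else Set.univ

/-- The dual balls on `𝔽_q^n`. -/
def ballH (F : Type*) [Zero F] [Fintype F] (n : ℕ) (ρ : ℝ) : Set (Fin n → F) :=
  if ρ < ((Fintype.card F : ℝ))⁻¹ then ∅ else if ρ < 1 then {0} else Set.univ

/-- The Fourier transform of `φ_ρ = χ_{B^G_ρ(0)}` on `𝔽_q^n`. -/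
noncomputable def phiFT (F : Type*) [Field F] [Fintype F] (n : ℕ) (ψ : AddChar F ℂ)
    (ρ : ℝ) (ξ : Fin n → F) : ℂ :=
  ∑ x : Fin n → F,
    Set.indicator (ballG F n ρ) (fun _ => (1 : ℂ)) x * ψ (-(∑ j, x j * ξ j))

/-
The Fourier transform of `φ_ρ` is explicit in each of the three regimes of `ρ`: it vanishes for
`ρ < 1`, is the constant `1` (the transform of `δ₀`) for `1 ≤ ρ < q`, and is `q ^ n • δ₀` for
`q ≤ ρ` by orthogonality of characters: for `η ≠ 0` the nontrivial character `ψ` composed with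
the surjective functional `x ↦ x ⬝ᵥ η` is again nontrivial, hence sums to zero. All three
conditions are then direct comparisons of these values with `ρ ^ n` and `s ^ (-n)`.
-/

lemma AddChar.compAddMonoidHom_ne_one {A B M : Type*} [AddMonoid A] [AddMonoid B] [Monoid M]
    {ψ : AddChar B M} (hψ : ψ ≠ 1) {f : A →+ B} (hf : Function.Surjective f) :
    ψ.compAddMonoidHom f ≠ 1 := by
  obtain ⟨b, hb⟩ := AddChar.ne_one_iff.1 hψ
  obtain ⟨a, rfl⟩ := hf b
  exact AddChar.ne_one_iff.2 ⟨a, hb⟩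

lemma AddChar.sum_apply_dotProduct {F ι R : Type*} [Field F] [Fintype F] [Fintype ι]
    [DecidableEq ι] [CommRing R] [IsDomain R] {ψ : AddChar F R} (hψ : ψ ≠ 1) (η : ι → F)
    [Decidable (η = 0)] :
    ∑ x : ι → F, ψ (x ⬝ᵥ η) = if η = 0 then (Fintype.card F : R) ^ Fintype.card ι else 0 := by
  split_ifs with hη
  · simp [hη, Fintype.card_pi]
  obtain ⟨i, hi⟩ := Function.ne_iff.1 hη
  let f : (ι → F) →+ F :=
    { toFun := (· ⬝ᵥ η), map_zero' := zero_dotProduct η, map_add' := (add_dotProduct · · η) }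
  have hf : Function.Surjective f := fun a =>
    ⟨Pi.single i (a / η i), by simp [f, single_dotProduct, div_mul_cancel₀ a hi]⟩
  exact AddChar.sum_eq_zero_of_ne_one (AddChar.compAddMonoidHom_ne_one hψ hf)

section Balls

variable {F : Type*} [Zero F] [Fintype F] {n : ℕ} {ρ : ℝ}

lemma one_le_card_cast : (1 : ℝ) ≤ Fintype.card F := by
  exact_mod_cast Fintype.card_pos

lemma ballG_of_lt_one (hρ : ρ < 1) : ballG F n ρ = ∅ := by
  simp [ballG, hρ]

lemma ballG_of_one_le_of_lt_card (h₁ : 1 ≤ ρ) (hq : ρ < Fintype.card F) :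
    ballG F n ρ = {0} := by
  simp [ballG, not_lt.2 h₁, hq]

lemma ballG_of_card_le (hq : (Fintype.card F : ℝ) ≤ ρ) : ballG F n ρ = Set.univ := by
  simp [ballG, not_lt.2 (one_le_card_cast.trans hq), not_lt.2 hq]

lemma lt_one_of_notMem_ballH {s : ℝ} {ξ : Fin n → F} (hξ : ξ ∉ ballH F n s) : s < 1 := by
  by_contra! hs
  apply hξ
  simp [ballH, not_lt.2 ((inv_le_one_of_one_le₀ one_le_card_cast).trans hs), not_lt.2 hs]

lemma lt_inv_card_of_zero_notMem_ballH {s : ℝ} (h₀ : (0 : Fin n → F) ∉ ballH F n s) :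
    s < (Fintype.card F : ℝ)⁻¹ := by
  by_contra! hs
  apply h₀
  rw [ballH, if_neg (not_lt.2 hs)]
  split_ifs <;> simp

lemma ncard_ballG_le (hρ : 0 ≤ ρ) : ((ballG F n ρ).ncard : ℝ) ≤ ρ ^ n := by
  rcases lt_or_ge ρ 1 with h₁ | h₁
  · simpa [ballG_of_lt_one h₁] using pow_nonneg hρ n
  rcases lt_or_ge ρ (Fintype.card F) with hq | hq
  · simpa [ballG_of_one_le_of_lt_card h₁ hq] using one_le_pow₀ h₁
  · simpa [ballG_of_card_le hq, Fintype.card_pi] using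
      pow_le_pow_left₀ (by positivity) hq n

end Balls

section FourierTransform

variable {F : Type*} [Field F] [Fintype F] {n : ℕ} {ψ : AddChar F ℂ} {ρ : ℝ}

lemma phiFT_of_lt_one (hρ : ρ < 1) (ξ : Fin n → F) : phiFT F n ψ ρ ξ = 0 := by
  simp [phiFT, ballG_of_lt_one hρ]

lemma phiFT_of_one_le_of_lt_card (h₁ : 1 ≤ ρ) (hq : ρ < Fintype.card F) (ξ : Fin n → F) :
    phiFT F n ψ ρ ξ = 1 := by
  rw [phiFT, ballG_of_one_le_of_lt_card h₁ hq, Fintype.sum_eq_single 0 fun x hx => by simp [hx]]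
  simp

open scoped Classical in
lemma phiFT_of_card_le (hψ : ψ ≠ 1) (hq : (Fintype.card F : ℝ) ≤ ρ) (ξ : Fin n → F) :
    phiFT F n ψ ρ ξ = if ξ = 0 then (Fintype.card F : ℂ) ^ n else 0 := by
  have h := AddChar.sum_apply_dotProduct hψ (-ξ)
  simp only [neg_eq_zero, Fintype.card_fin, dotProduct_neg] at h
  simpa [phiFT, ballG_of_card_le hq, dotProduct] using h

lemma norm_phiFT_le (hψ : ψ ≠ 1) (hρ : 0 < ρ) {s : ℝ} (hs : 1 / ρ ≤ s) {ξ : Fin n → F}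
    (hξ : -ξ ∉ ballH F n s) : ‖phiFT F n ψ ρ ξ‖ ≤ s ^ (-(n : ℝ)) := by
  have hs₀ : 0 < s := (one_div_pos.2 hρ).trans_le hs
  rw [Real.rpow_neg hs₀.le, Real.rpow_natCast, ← inv_pow]
  rcases lt_or_ge ρ 1 with h₁ | h₁
  · simp only [phiFT_of_lt_one h₁, norm_zero]
    positivity
  rcases lt_or_ge ρ (Fintype.card F) with hq | hq
  · rw [phiFT_of_one_le_of_lt_card h₁ hq, norm_one]
    exact one_le_pow₀ (one_le_inv₀ hs₀ |>.2 (lt_one_of_notMem_ballH hξ).le)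
  rw [phiFT_of_card_le hψ hq]
  split_ifs with h₀
  · subst h₀
    have hsq := lt_inv_card_of_zero_notMem_ballH (by simpa using hξ)
    rw [norm_pow, Complex.norm_natCast]
    exact pow_le_pow_left₀ (by positivity) ((le_inv_comm₀ hs₀ (by positivity)).1 hsq.le) n
  · simp only [norm_zero]
    positivity

lemma sum_norm_phiFT_le (hψ : ψ ≠ 1) (ρ : ℝ) :
    ∑ ξ : Fin n → F, ‖phiFT F n ψ ρ ξ‖ ≤ (Fintype.card F : ℝ) ^ n := by
  rcases lt_or_ge ρ 1 with h₁ | h₁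
  · simp [phiFT_of_lt_one h₁]
  rcases lt_or_ge ρ (Fintype.card F) with hq | hq
  · simp [phiFT_of_one_le_of_lt_card h₁ hq, Fintype.card_pi]
  · rw [Fintype.sum_eq_single 0 fun ξ hξ => by simp [phiFT_of_card_le hψ hq, hξ]]
    simp [phiFT_of_card_le hψ hq]

end FourierTransform

theorem stmt_8 (F : Type*) [Field F] [Fintype F] (n : ℕ)
    (ψ : AddChar F ℂ) (hψ : ψ ≠ 1) :
    (∀ ρ : ℝ, 0 < ρ → ((ballG F n ρ).ncard : ℝ) ≤ ρ ^ (n : ℝ)) ∧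
    (∀ ρ : ℝ, 0 < ρ → ∀ s : ℝ, 1 / ρ ≤ s → ∀ ξ : Fin n → F, -ξ ∉ ballH F n s →
        ‖phiFT F n ψ ρ ξ‖ ≤ s ^ (-(n : ℝ))) ∧
    (∀ ρ : ℝ, 0 < ρ →
        ((Fintype.card F : ℝ) ^ n)⁻¹ * ∑ ξ : Fin n → F, ‖phiFT F n ψ ρ ξ‖ ≤ 1) := by
  exact ⟨fun ρ hρ => Real.rpow_natCast ρ n ▸ ncard_ballG_le hρ.le,
    fun ρ hρ s hs ξ hξ => norm_phiFT_le hψ hρ hs hξ,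
    fun ρ _ => inv_mul_le_one_of_le₀ (sum_norm_phiFT_le hψ ρ) (by positivity)⟩
end

section
/- Let μ be the pushforward to ℚ_p^n of the Haar probability measure on ℤ_p^{n-1} under ω ↦ (ω, ω₁²+⋯+ω_{n-1}²), where p is an odd prime. Then μ(B_ρ(ξ)) ≤ ρ^{n-1} for all ξ ∈ ℚ_p^n and ρ > 0, where B_ρ(ξ) is the ball of radius ρ in the ℓ^∞ p-adic norm ‖x‖ = max_j |x_j|_p. -/
open MeasureTheory

/-- The graphing map of the paraboloid `ω ↦ (ω, ω₁² + ⋯ + ω_{n-1}²)` over `ℚ_p`. -/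
noncomputable def padicParab (p : ℕ) [Fact p.Prime] (n : ℕ)
    (ω : Fin (n - 1) → ℤ_[p]) : Fin n → ℚ_[p] :=
  fun i => if h : (i : ℕ) < n - 1 then (ω ⟨i, h⟩ : ℚ_[p])
    else ∑ j : Fin (n - 1), (ω j : ℚ_[p]) ^ 2

/-!
Forgetting the last coordinate does not increase distances between points of the paraboloid, and
the sup norm is ultrametric, so the part of the paraboloid inside a ball of radius `ρ` lies over a
ball of radius `ρ` in `ℤ_pⁿ⁻¹`. Rounding `ρ` down to a power `p⁻ᵏ`, that ball becomes the kernel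
of reduction modulo `pᵏ`, a subgroup of index `p^(k(n-1))`, whose Haar measure is therefore
`p^(-k(n-1)) ≤ ρⁿ⁻¹`.
-/

open Metric
open scoped ENNReal

lemma AddSubgroup.measure_eq_inv_index {G : Type*} [MeasurableSpace G] [AddGroup G]
    [MeasurableAdd G] (H : AddSubgroup G) [H.FiniteIndex] (hH : MeasurableSet (H : Set G))
    (μ : Measure G) [IsProbabilityMeasure μ] [μ.IsAddLeftInvariant] :
    μ H = (H.index : ℝ≥0∞)⁻¹ :=
  ENNReal.eq_inv_of_mul_eq_one_left <| by rw [mul_comm, H.index_mul_measure hH μ, measure_univ]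

namespace PadicInt

variable {p : ℕ} [Fact p.Prime]

theorem closedBall_zero_zpow_eq_ker (m k : ℕ) :
    closedBall (0 : Fin m → ℤ_[p]) ((p : ℝ) ^ (-(k : ℤ))) =
      ((toZModPow (p := p) k).compLeft (Fin m)).toAddMonoidHom.ker := by
  ext x
  simp only [mem_closedBall_zero_iff, pi_norm_le_iff_of_nonneg (zpow_nonneg (Nat.cast_nonneg p) _),
    norm_le_pow_iff_mem_span_pow, ← ker_toZModPow, RingHom.mem_ker, SetLike.mem_coe,
    AddMonoidHom.mem_ker, funext_iff]
  rfl

theorem index_ker_toZModPow_compLeft (m k : ℕ) :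
    ((toZModPow (p := p) k).compLeft (Fin m)).toAddMonoidHom.ker.index = p ^ (k * m) := by
  rw [AddSubgroup.index_ker, AddMonoidHom.range_eq_top.mpr, AddSubgroup.card_top, Nat.card_fun,
    Nat.card_zmod, Nat.card_fin, ← pow_mul]
  exact (ZMod.ringHom_surjective (toZModPow k)).comp_left

theorem measure_closedBall_zero_zpow [MeasurableSpace ℤ_[p]] [BorelSpace ℤ_[p]] (m k : ℕ)
    (μ : Measure (Fin m → ℤ_[p])) [IsProbabilityMeasure μ] [μ.IsAddLeftInvariant] :
    μ (closedBall 0 ((p : ℝ) ^ (-(k : ℤ)))) = ((p ^ (k * m) : ℕ) : ℝ≥0∞)⁻¹ := by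
  set f := ((toZModPow (p := p) k).compLeft (Fin m)).toAddMonoidHom
  have : f.ker.FiniteIndex := AddSubgroup.finiteIndex_ker f
  have hmeas : MeasurableSet (f.ker : Set (Fin m → ℤ_[p])) :=
    closedBall_zero_zpow_eq_ker (p := p) m k ▸ measurableSet_closedBall
  rw [closedBall_zero_zpow_eq_ker, AddSubgroup.measure_eq_inv_index _ hmeas μ,
    index_ker_toZModPow_compLeft]

theorem exists_zpow_le_and_closedBall_subset {ρ : ℝ} (hρ : 0 < ρ) :
    ∃ k : ℕ, (p : ℝ) ^ (-(k : ℤ)) ≤ ρ ∧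
      closedBall (0 : ℤ_[p]) ρ ⊆ closedBall 0 ((p : ℝ) ^ (-(k : ℤ))) := by
  classical
  have hp : (1 : ℝ) < p := mod_cast (Fact.out : p.Prime).one_lt
  have hex : ∃ k : ℕ, (p : ℝ) ^ (-(k : ℤ)) ≤ ρ := by
    obtain ⟨k, hk⟩ := pow_unbounded_of_one_lt ρ⁻¹ hp
    exact ⟨k, by rw [zpow_neg, zpow_natCast]; exact inv_le_of_inv_le₀ hρ hk.le⟩
  refine ⟨Nat.find hex, Nat.find_spec hex, fun x hx => ?_⟩
  rw [mem_closedBall_zero_iff] at hx ⊢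
  rcases eq_or_ne x 0 with rfl | hx0
  · simp
  · rw [norm_le_pow_iff_le_valuation x hx0]
    refine Nat.find_min' hex ?_
    rwa [← norm_eq_zpow_neg_valuation hx0]

theorem measure_closedBall_le [MeasurableSpace ℤ_[p]] [BorelSpace ℤ_[p]] {m : ℕ}
    (μ : Measure (Fin m → ℤ_[p])) [IsProbabilityMeasure μ] [μ.IsAddLeftInvariant]
    (x : Fin m → ℤ_[p]) {ρ : ℝ} (hρ : 0 < ρ) :
    μ (closedBall x ρ) ≤ ENNReal.ofReal (ρ ^ m) := by
  obtain ⟨k, hkρ, hball⟩ := exists_zpow_le_and_closedBall_subset (p := p) hρ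
  have hpk : 0 ≤ (p : ℝ) ^ (-(k : ℤ)) := by positivity
  have hsub : closedBall (0 : Fin m → ℤ_[p]) ρ ⊆ closedBall 0 ((p : ℝ) ^ (-(k : ℤ))) := by
    intro y hy
    rw [mem_closedBall_zero_iff, pi_norm_le_iff_of_nonneg hpk]
    rw [mem_closedBall_zero_iff, pi_norm_le_iff_of_nonneg hρ.le] at hy
    exact fun i => mem_closedBall_zero_iff.mp (hball (mem_closedBall_zero_iff.mpr (hy i)))
  calc μ (closedBall x ρ) = μ ((fun y => -x + y) ⁻¹' closedBall 0 ρ) := by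
        rw [preimage_add_closedBall, sub_neg_eq_add, zero_add]
    _ = μ (closedBall 0 ρ) := measure_preimage_add μ _ _
    _ ≤ μ (closedBall 0 ((p : ℝ) ^ (-(k : ℤ)))) := measure_mono hsub
    _ = ENNReal.ofReal (((p : ℝ) ^ (-(k : ℤ))) ^ m) := by
        rw [measure_closedBall_zero_zpow, zpow_neg, zpow_natCast, inv_pow, ← pow_mul,
          ENNReal.ofReal_inv_of_pos (pow_pos (mod_cast (Fact.out : p.Prime).pos) _),
          ← Nat.cast_pow, ENNReal.ofReal_natCast]
    _ ≤ ENNReal.ofReal (ρ ^ m) := ENNReal.ofReal_le_ofReal (pow_le_pow_left₀ hpk hkρ m)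

end PadicInt

section Paraboloid

variable {p : ℕ} [Fact p.Prime] {n : ℕ}

theorem padicParab_castLE (ω : Fin (n - 1) → ℤ_[p]) (i : Fin (n - 1)) :
    padicParab p n ω (Fin.castLE (Nat.sub_le n 1) i) = ω i :=
  dif_pos i.2

theorem continuous_padicParab : Continuous (padicParab p n) := by
  refine continuous_pi fun i => ?_
  unfold padicParab
  split_ifs
  · exact continuous_subtype_val.comp (continuous_apply _)
  · exact continuous_finsetSum _ fun j _ =>
      (continuous_subtype_val.comp (continuous_apply j)).pow 2

theorem norm_sub_le_norm_padicParab_sub (ω ω' : Fin (n - 1) → ℤ_[p]) :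
    ‖ω - ω'‖ ≤ ‖padicParab p n ω - padicParab p n ω'‖ := by
  refine (pi_norm_le_iff_of_nonneg (norm_nonneg _)).mpr fun i => ?_
  calc ‖(ω - ω') i‖
      = ‖(padicParab p n ω - padicParab p n ω') (Fin.castLE (Nat.sub_le n 1) i)‖ := by
        simp [padicParab_castLE, PadicInt.norm_def]
    _ ≤ _ := norm_le_pi_norm _ _

theorem padicParab_preimage_closedBall_subset {ξ : Fin n → ℚ_[p]} {ρ : ℝ}
    {ω₀ : Fin (n - 1) → ℤ_[p]} (hω₀ : ω₀ ∈ padicParab p n ⁻¹' closedBall ξ ρ) :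
    padicParab p n ⁻¹' closedBall ξ ρ ⊆ closedBall ω₀ ρ := fun ω hω => by
  rw [mem_closedBall, dist_eq_norm]
  refine (norm_sub_le_norm_padicParab_sub ω ω₀).trans ?_
  rw [← dist_eq_norm]
  exact (IsUltrametricDist.dist_triangle_max _ ξ _).trans (max_le hω (mem_closedBall'.mp hω₀))

end Paraboloid

theorem stmt_11_general (p : ℕ) [Fact p.Prime] (n : ℕ) (hn : 2 ≤ n)
    [MeasurableSpace ℚ_[p]] [BorelSpace ℚ_[p]]
    [MeasurableSpace ℤ_[p]] [BorelSpace ℤ_[p]]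
    (mZ : Measure (Fin (n - 1) → ℤ_[p])) [IsProbabilityMeasure mZ] [mZ.IsAddLeftInvariant]
    (ξ : Fin n → ℚ_[p]) (ρ : ℝ) (hρ : 0 < ρ) :
    mZ.map (padicParab p n) {x : Fin n → ℚ_[p] | ‖x - ξ‖ ≤ ρ}
      ≤ ENNReal.ofReal (ρ ^ ((n : ℝ) - 1)) := by
  have hball : {x : Fin n → ℚ_[p] | ‖x - ξ‖ ≤ ρ} = closedBall ξ ρ := by
    ext
    simp [dist_eq_norm]
  rw [hball, Measure.map_apply continuous_padicParab.measurable measurableSet_closedBall]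
  obtain hempty | ⟨ω₀, hω₀⟩ := (padicParab p n ⁻¹' closedBall ξ ρ).eq_empty_or_nonempty
  · simp [hempty]
  have hdim : (n : ℝ) - 1 = ((n - 1 : ℕ) : ℝ) := by
    rw [Nat.cast_sub (by omega), Nat.cast_one]
  rw [hdim, Real.rpow_natCast]
  exact (measure_mono (padicParab_preimage_closedBall_subset hω₀)).trans
    (PadicInt.measure_closedBall_le mZ ω₀ hρ)

theorem stmt_11 (p : ℕ) [Fact p.Prime] (hodd : Odd p) (n : ℕ) (hn : 2 ≤ n)
    [MeasurableSpace ℚ_[p]] [BorelSpace ℚ_[p]]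
    [MeasurableSpace ℤ_[p]] [BorelSpace ℤ_[p]]
    (mZ : Measure (Fin (n - 1) → ℤ_[p])) [IsProbabilityMeasure mZ] [mZ.IsAddLeftInvariant]
    (ξ : Fin n → ℚ_[p]) (ρ : ℝ) (hρ : 0 < ρ) :
    mZ.map (padicParab p n) {x : Fin n → ℚ_[p] | ‖x - ξ‖ ≤ ρ}
      ≤ ENNReal.ofReal (ρ ^ ((n : ℝ) - 1)) :=
  stmt_11_general p n hn mZ ξ ρ hρ
end

section
/- Let p be an odd prime and e : ℚ_p → ℂ^× the standard additive character (trivial on ℤ_p, nontrivial on p^{-1}ℤ_p). For a, b ∈ ℚ_p with max(|a|_p, |b|_p) > 1, the oscillatory integral G(a,b) := ∫_{ℤ_p} e(at + bt²) dt satisfies |G(a,b)| = |b|_p^{-1/2} if |a|_p ≤ |b|_p, and G(a,b) = 0 if |a|_p > |b|_p. -/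
/-!
Completing the square (the stationary point `-a / (2b)` lies in `ℤ_[p]` when `‖a‖ ≤ ‖b‖`)
reduces the first claim to `∫_{ℤ_[p]} e (b t²)`. Everything else rests on one device: if
translating a ball by `s` multiplies the integrand by a constant `≠ 1`, the integral over that
ball vanishes. When `‖b‖ < ‖a‖` the shift `s = 1 / (p a)` does this on all of `ℤ_[p]`. When
`‖b‖ = p ^ N` it kills every coset `j + p ^ d ℤ_[p]` with `j ∉ p ^ d ℤ_[p]` as long as `2 d ≤ N`,
so the integral concentrates on `p ^ ⌊N / 2⌋ ℤ_[p]`. For even `N` the integrand is `1` there,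
giving `p ^ (-N / 2)`; for `N = 2 k + 1` it is constant on the cosets of `p ^ (k + 1) ℤ_[p]`, and
the integral is `p ^ (-k - 1)` times a quadratic Gauss sum modulo `p`, of absolute value `√p`.
-/

open MeasureTheory Metric Finset
open scoped ENNReal

namespace MeasureTheory

variable {E : Type*} [NormedAddCommGroup E] [MeasurableSpace E]

lemma measure_closedBall_eq_measure_closedBall_zero [MeasurableAdd E] (μ : Measure E)
    [μ.IsAddLeftInvariant] (x : E) (r : ℝ) : μ (closedBall x r) = μ (closedBall 0 r) := by
  have : closedBall (0 : E) r = (x + ·) ⁻¹' closedBall x r := by simp [preimage_add_closedBall]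
  rw [this, measure_preimage_add]

variable [BorelSpace E] [IsUltrametricDist E] (μ : Measure E) [μ.IsAddLeftInvariant]
  {𝕜 : Type*} [RCLike 𝕜]

lemma setIntegral_closedBall_comp_add_right (f : E → 𝕜) {x s : E} {r : ℝ} (hs : ‖s‖ ≤ r) :
    ∫ t in closedBall x r, f (t + s) ∂μ = ∫ t in closedBall x r, f t ∂μ := by
  have h := (measurePreserving_add_right μ s).setIntegral_preimage_emb
    (measurableEmbedding_addRight s) f (closedBall x r)
  rwa [Metric.preimage_add_right_closedBall, ← IsUltrametricDist.closedBall_eq_of_mem] at h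
  simpa [dist_eq_norm] using hs

lemma setIntegral_closedBall_eq_zero_of_comp_add {f : E → 𝕜} {x s : E} {r : ℝ} {c : 𝕜}
    (hs : ‖s‖ ≤ r) (hc : c ≠ 1) (hf : ∀ t ∈ closedBall x r, f (t + s) = c * f t) :
    ∫ t in closedBall x r, f t ∂μ = 0 := by
  by_contra h
  refine hc ((mul_eq_right₀ h).1 ?_)
  rw [← integral_const_mul, ← setIntegral_congr_fun measurableSet_closedBall hf,
    setIntegral_closedBall_comp_add_right μ f hs]

end MeasureTheory

lemma AddChar.norm_sum_apply_sq {F : Type*} [Field F] [Fintype F] (hF : ringChar F ≠ 2)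
    {ψ : AddChar F ℂ} (hψ : ψ ≠ 1) : ‖∑ x, ψ (x ^ 2)‖ = √(Fintype.card F) := by
  classical
  have hconj (a : F) : starRingEnd ℂ (ψ a) = ψ (-a) := by
    rw [starComp_apply (Nat.pos_of_ne_zero (CharP.ringChar_ne_zero_of_finite F)), inv_apply]
  -- Substituting `x = y + d` turns `x ^ 2 - y ^ 2` into `d ^ 2 + 2 d y`, which is linear in `y`.
  have key : (∑ x, ψ (x ^ 2)) * starRingEnd ℂ (∑ x, ψ (x ^ 2)) = Fintype.card F := by
    calc _ = ∑ y, ∑ d, ψ (d ^ 2) * ψ (y * (2 * d)) := by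
          rw [map_sum, sum_mul_sum, sum_comm]
          refine sum_congr rfl fun y _ => ?_
          rw [← Equiv.sum_comp (Equiv.addLeft y)]
          refine sum_congr rfl fun d _ => ?_
          rw [hconj, ← map_add_eq_mul, ← map_add_eq_mul, Equiv.coe_addLeft]
          ring_nf
      _ = ∑ d, ψ (d ^ 2) * ∑ y, ψ (y * (2 * d)) := by
          rw [sum_comm]; simp_rw [mul_sum]
      _ = Fintype.card F := by
          simp [sum_mulShift _ (IsPrimitive.of_ne_one hψ), Ring.two_ne_zero hF]
  rw [Complex.mul_conj] at key
  rw [Complex.norm_def, (by exact_mod_cast key : Complex.normSq _ = Fintype.card F)]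

namespace Padic

variable {p : ℕ} [hp : Fact p.Prime]

lemma natCast_mul_norm_le_of_norm_lt {x y : ℚ_[p]} (h : ‖x‖ < ‖y‖) : p * ‖x‖ ≤ ‖y‖ := by
  rcases eq_or_ne x 0 with rfl | hx
  · simp
  have hy : y ≠ 0 := by rintro rfl; exact (norm_nonneg x).not_gt (by simpa using h)
  have hp1 : (1 : ℝ) < p := mod_cast hp.out.one_lt
  rw [norm_eq_zpow_neg_valuation hx, norm_eq_zpow_neg_valuation hy,
    zpow_lt_zpow_iff_right₀ hp1] at h
  rw [norm_eq_zpow_neg_valuation hx, norm_eq_zpow_neg_valuation hy]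
  calc (p : ℝ) * p ^ (-x.valuation) = p ^ (-x.valuation + 1) := by
        rw [zpow_add_one₀ (by positivity), mul_comm]
    _ ≤ p ^ (-y.valuation) := zpow_le_zpow_right₀ hp1.le (by omega)

lemma exists_norm_eq_pow_of_one_le {x : ℚ_[p]} (h : 1 ≤ ‖x‖) :
    ∃ N : ℕ, ‖x‖ = (p : ℝ) ^ N := by
  have hx : x ≠ 0 := by rintro rfl; norm_num at h
  have hp1 : (1 : ℝ) < p := mod_cast hp.out.one_lt
  rw [norm_eq_zpow_neg_valuation hx] at h ⊢
  refine ⟨(-x.valuation).toNat, ?_⟩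
  rw [← zpow_natCast, Int.toNat_of_nonneg ((one_le_zpow_iff_right₀ hp1).1 h)]

lemma norm_two_eq_one (hodd : Odd p) : ‖(2 : ℚ_[p])‖ = 1 := by
  exact_mod_cast norm_natCast_eq_one_iff.2 (Nat.coprime_two_right.2 hodd)

lemma norm_two_le_one : ‖(2 : ℚ_[p])‖ ≤ 1 := by
  simpa using norm_int_le_one (p := p) 2

lemma norm_p_pow_eq_inv (k : ℕ) : ‖(p : ℚ_[p]) ^ k‖ = ((p : ℝ) ^ k)⁻¹ := by
  rw [norm_pow, norm_p, inv_pow]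

lemma exists_lt_norm_sub_natCast_le {x : ℚ_[p]} (hx : ‖x‖ ≤ 1) (d : ℕ) :
    ∃ n < p ^ d, ‖x - n‖ ≤ ((p : ℝ) ^ d)⁻¹ := by
  let z : ℤ_[p] := ⟨x, hx⟩
  refine ⟨z.appr d, z.appr_lt d, ?_⟩
  have := (PadicInt.norm_le_pow_iff_mem_span_pow _ d).2 (z.appr_spec d)
  rwa [zpow_neg, zpow_natCast] at this

lemma inv_pow_lt_norm_natCast_sub {i j d : ℕ} (hi : i < p ^ d) (hj : j < p ^ d) (hij : i ≠ j) :
    ((p : ℝ) ^ d)⁻¹ < ‖(i : ℚ_[p]) - j‖ := by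
  by_contra! h
  rw [← zpow_natCast, ← zpow_neg, show (i : ℚ_[p]) - j = ((i - j : ℤ) : ℚ_[p]) by push_cast; rfl,
    norm_int_le_pow_iff_dvd] at h
  have hi' : (i : ℤ) < p ^ d := mod_cast hi
  have hj' : (j : ℤ) < p ^ d := mod_cast hj
  have := Int.eq_zero_of_abs_lt_dvd h (by rw [abs_lt]; omega)
  omega

lemma closedBall_zero_eq_biUnion (k d : ℕ) :
    closedBall (0 : ℚ_[p]) ((p : ℝ) ^ k)⁻¹ =
      ⋃ j ∈ range (p ^ d), closedBall ((j : ℚ_[p]) * p ^ k) ((p : ℝ) ^ (k + d))⁻¹ := by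
  have hpk : (p : ℚ_[p]) ^ k ≠ 0 := pow_ne_zero _ (mod_cast hp.out.ne_zero)
  have hp0 : (0 : ℝ) < p := mod_cast hp.out.pos
  ext t
  simp only [Set.mem_iUnion, mem_range, mem_closedBall, dist_eq_norm, sub_zero, exists_prop]
  constructor
  · intro ht
    obtain ⟨n, hn, hxn⟩ := exists_lt_norm_sub_natCast_le (x := t / (p : ℚ_[p]) ^ k)
      (by rwa [norm_div, norm_p_pow_eq_inv, div_le_one (inv_pos.2 (pow_pos hp0 k))]) d
    refine ⟨n, hn, ?_⟩
    rw [show t - n * p ^ k = (t / p ^ k - n) * p ^ k by field_simp, norm_mul, norm_p_pow_eq_inv,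
      pow_add, mul_inv, mul_comm (_⁻¹)]
    gcongr
  · rintro ⟨j, -, ht⟩
    have hj : ‖(j : ℚ_[p]) * p ^ k‖ ≤ ((p : ℝ) ^ k)⁻¹ := by
      rw [norm_mul, norm_p_pow_eq_inv]
      exact mul_le_of_le_one_left (inv_pos.2 (pow_pos hp0 k)).le (mod_cast norm_int_le_one j)
    have hr : ((p : ℝ) ^ (k + d))⁻¹ ≤ ((p : ℝ) ^ k)⁻¹ :=
      inv_anti₀ (pow_pos hp0 k) (pow_le_pow_right₀ (mod_cast hp.out.one_le) le_self_add)
    calc ‖t‖ = ‖(t - j * p ^ k) + j * p ^ k‖ := by rw [sub_add_cancel]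
      _ ≤ ((p : ℝ) ^ k)⁻¹ :=
          (IsUltrametricDist.norm_add_le_max _ _).trans (max_le (ht.trans hr) hj)

lemma pairwiseDisjoint_closedBall (k d : ℕ) :
    (range (p ^ d) : Set ℕ).PairwiseDisjoint
      fun j => closedBall ((j : ℚ_[p]) * p ^ k) ((p : ℝ) ^ (k + d))⁻¹ := by
  intro i hi j hj hij
  have hp0 : (0 : ℝ) < p := mod_cast hp.out.pos
  refine (IsUltrametricDist.closedBall_eq_or_disjoint _ _ _).resolve_left fun h => ?_
  have hmem := h ▸ mem_closedBall_self (x := (i : ℚ_[p]) * p ^ k) (inv_pos.2 (pow_pos hp0 _)).le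
  rw [mem_closedBall, dist_eq_norm, ← sub_mul, norm_mul, norm_p_pow_eq_inv, pow_add, mul_inv,
    mul_comm, mul_le_mul_iff_right₀ (inv_pos.2 (pow_pos hp0 k))] at hmem
  exact hmem.not_gt (inv_pow_lt_norm_natCast_sub (mem_range.1 hi) (mem_range.1 hj) hij)

section Character

variable {e : AddChar ℚ_[p] ℂ} (he1 : ∀ t : ℚ_[p], ‖t‖ ≤ 1 → e t = 1)
include he1

lemma apply_eq_of_norm_sub_le_one {u v : ℚ_[p]} (h : ‖u - v‖ ≤ 1) : e u = e v := by
  rw [← sub_add_cancel u v, AddChar.map_add_eq_mul, he1 _ h, one_mul]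

lemma norm_apply_eq_one (z : ℚ_[p]) : ‖e z‖ = 1 := by
  have hp0 : (0 : ℝ) < p := mod_cast hp.out.pos
  obtain ⟨N, hN⟩ := pow_unbounded_of_one_lt ‖z‖ (mod_cast hp.out.one_lt : (1 : ℝ) < p)
  refine Complex.norm_eq_one_of_pow_eq_one (n := p ^ N) ?_ (pow_ne_zero _ hp.out.ne_zero)
  rw [← AddChar.map_nsmul_eq_pow, nsmul_eq_mul, Nat.cast_pow]
  refine he1 _ ?_
  rw [norm_mul, norm_p_pow_eq_inv, inv_mul_le_one₀ (pow_pos hp0 N)]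
  exact hN.le

lemma continuous_of_forall_norm_le_one : Continuous e := by
  refine IsLocallyConstant.continuous <| (IsLocallyConstant.iff_eventually_eq _).2 fun x => ?_
  filter_upwards [closedBall_mem_nhds x one_pos] with y hy
  exact apply_eq_of_norm_sub_le_one he1 (by rwa [mem_closedBall, dist_eq_norm] at hy)

lemma apply_ne_one_of_norm_eq (he2 : ∃ t : ℚ_[p], ‖t‖ ≤ p ∧ e t ≠ 1) {x : ℚ_[p]}
    (hx : ‖x‖ = p) : e x ≠ 1 := by
  intro hex
  obtain ⟨t, htp, ht⟩ := he2
  have hp0 : (0 : ℝ) < p := mod_cast hp.out.pos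
  have hx0 : x ≠ 0 := by rintro rfl; simp [hp0.ne] at hx
  obtain ⟨n, -, hn⟩ := exists_lt_norm_sub_natCast_le (x := t / x)
    (by rwa [norm_div, hx, div_le_one hp0]) 1
  -- `t ∈ n x + ℤ_[p]`, on which `e` takes the value `e x ^ n = 1`.
  refine ht ?_
  calc e t = e (n • x) := apply_eq_of_norm_sub_le_one he1 ?_
    _ = 1 := by rw [AddChar.map_nsmul_eq_pow, hex, one_pow]
  rw [nsmul_eq_mul, show t - n * x = (t / x - n) * x by field_simp, norm_mul, hx]
  rw [pow_one] at hn
  exact (mul_le_mul_of_nonneg_right hn hp0.le).trans (inv_mul_cancel₀ hp0.ne').le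

lemma apply_quadratic_comp_add {a b x s t : ℚ_[p]} {r : ℝ} (hs : ‖s‖ ≤ r)
    (hbs : ‖b * s‖ * r ≤ 1) (ht : t ∈ closedBall x r) :
    e (a * (t + s) + b * (t + s) ^ 2) = e ((a + 2 * b * x) * s) * e (a * t + b * t ^ 2) := by
  rw [← AddChar.map_add_eq_mul]
  refine apply_eq_of_norm_sub_le_one he1 ?_
  rw [mem_closedBall, dist_eq_norm] at ht
  have h2 : ‖2 * (t - x)‖ ≤ r := by
    rw [norm_mul]; exact (mul_le_of_le_one_left (norm_nonneg _) norm_two_le_one).trans ht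
  have hr : ‖2 * (t - x) + s‖ ≤ r :=
    (IsUltrametricDist.norm_add_le_max _ _).trans (max_le h2 hs)
  calc _ = ‖b * s * (2 * (t - x) + s)‖ := by congr 1; ring
    _ ≤ ‖b * s‖ * r := by rw [norm_mul]; gcongr
    _ ≤ 1 := hbs

lemma apply_mul_sq_eq_of_mem_closedBall {b y t : ℚ_[p]} {r ρ : ℝ} (ht : t ∈ closedBall y r)
    (hr : r ≤ ρ) (hy : ‖y‖ ≤ ρ) (hbr : ‖b‖ * r * ρ ≤ 1) : e (b * t ^ 2) = e (b * y ^ 2) := by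
  refine apply_eq_of_norm_sub_le_one he1 ?_
  rw [mem_closedBall, dist_eq_norm] at ht
  have h2y : ‖2 * y‖ ≤ ρ := by
    rw [norm_mul]; exact (mul_le_of_le_one_left (norm_nonneg _) norm_two_le_one).trans hy
  have hρ : ‖t - y + 2 * y‖ ≤ ρ :=
    (IsUltrametricDist.norm_add_le_max _ _).trans (max_le (ht.trans hr) h2y)
  have hr0 : 0 ≤ r := (norm_nonneg _).trans ht
  calc ‖b * t ^ 2 - b * y ^ 2‖ = ‖b‖ * ‖t - y‖ * ‖t - y + 2 * y‖ := by
        rw [← norm_mul, ← norm_mul]; congr 1; ring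
    _ ≤ ‖b‖ * r * ρ := by gcongr
    _ ≤ 1 := hbr

lemma norm_sum_range_apply_mul_sq (he : ∀ y : ℚ_[p], ‖y‖ = p → e y ≠ 1) (hp2 : p ≠ 2)
    {c : ℚ_[p]} (hc : ‖c‖ = p) : ‖∑ i ∈ range p, e (c * i ^ 2)‖ = √p := by
  have hp0 : (0 : ℝ) < p := mod_cast hp.out.pos
  have hζ : e c ^ p = 1 := by
    rw [← AddChar.map_nsmul_eq_pow, nsmul_eq_mul]
    exact he1 _ (by rw [norm_mul, norm_p, hc, inv_mul_cancel₀ hp0.ne'])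
  set ψ := AddChar.zmodChar p hζ
  have hψ (i : ℕ) : ψ i = e (c * i) := by
    rw [AddChar.zmodChar_apply', ← AddChar.map_nsmul_eq_pow, nsmul_eq_mul, mul_comm]
  have hψ1 : ψ ≠ 1 := fun h => he c hc (by simpa [h] using (hψ 1).symm)
  have hsum := AddChar.norm_sum_apply_sq (by rwa [ZMod.ringChar_zmod_n]) hψ1
  rw [ZMod.card] at hsum
  rw [← hsum]
  congr 1
  refine sum_nbij' (↑) ZMod.val (fun _ _ => mem_univ _) (fun x _ => mem_range.2 (ZMod.val_lt x))
    (fun i hi => ZMod.val_cast_of_lt (mem_range.1 hi)) (fun x _ => ZMod.natCast_zmod_val x)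
    fun i _ => ?_
  rw [← Nat.cast_pow (α := ZMod p), hψ, Nat.cast_pow]

end Character

section Haar

variable [MeasurableSpace ℚ_[p]] [BorelSpace ℚ_[p]] {m : Measure ℚ_[p]}

lemma setIntegral_closedBall_zero_eq_sum {E : Type*} [NormedAddCommGroup E] [NormedSpace ℝ E]
    {f : ℚ_[p] → E} (k d : ℕ) (hf : IntegrableOn f (closedBall 0 ((p : ℝ) ^ k)⁻¹) m) :
    ∫ t in closedBall 0 ((p : ℝ) ^ k)⁻¹, f t ∂m =
      ∑ j ∈ range (p ^ d),
        ∫ t in closedBall ((j : ℚ_[p]) * p ^ k) ((p : ℝ) ^ (k + d))⁻¹, f t ∂m := by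
  rw [closedBall_zero_eq_biUnion k d] at hf ⊢
  exact integral_biUnion_finset _ (fun _ _ => measurableSet_closedBall)
    (pairwiseDisjoint_closedBall k d) fun j hj => hf.mono_set
      (subset_set_biUnion_of_mem (f := fun j : ℕ => closedBall ((j : ℚ_[p]) * p ^ k) _) hj)

variable [m.IsAddLeftInvariant]

-- `p ^ k` translates of the ball of radius `p⁻ᵏ` tile the unit ball.
lemma measure_closedBall_inv_pow (hm : m (closedBall 0 1) = 1) (x : ℚ_[p]) (k : ℕ) :
    m (closedBall x ((p : ℝ) ^ k)⁻¹) = ((p : ℝ≥0∞) ^ k)⁻¹ := by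
  rw [measure_closedBall_eq_measure_closedBall_zero]
  refine ENNReal.eq_inv_of_mul_eq_one_left ?_
  have hunion := closedBall_zero_eq_biUnion (p := p) 0 k
  have hdisj := pairwiseDisjoint_closedBall (p := p) 0 k
  simp only [pow_zero, inv_one, mul_one, zero_add] at hunion hdisj
  rw [← hm, hunion, measure_biUnion_finset hdisj (fun _ _ => measurableSet_closedBall)]
  simp [measure_closedBall_eq_measure_closedBall_zero m _ ((p : ℝ) ^ k)⁻¹, mul_comm]

lemma measureReal_closedBall_inv_pow (hm : m (closedBall 0 1) = 1) (x : ℚ_[p]) (k : ℕ) :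
    m.real (closedBall x ((p : ℝ) ^ k)⁻¹) = ((p : ℝ) ^ k)⁻¹ := by
  simp [measureReal_def, measure_closedBall_inv_pow hm]

lemma setIntegral_quadratic_eq_mul (hodd : Odd p) {e : AddChar ℚ_[p] ℂ} {a b : ℚ_[p]}
    (hab : ‖a‖ ≤ ‖b‖) (hb : b ≠ 0) :
    ∫ t in closedBall 0 1, e (a * t + b * t ^ 2) ∂m =
      e (-(a ^ 2 / (4 * b))) * ∫ t in closedBall 0 1, e (b * t ^ 2) ∂m := by
  -- Complete the square: shift by the stationary point `-a / (2 b) ∈ ℤ_[p]`.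
  have hc : ‖-a / (2 * b)‖ ≤ 1 := by
    rw [norm_div, norm_neg, norm_mul, norm_two_eq_one hodd, one_mul]
    exact div_le_one_of_le₀ hab (norm_nonneg _)
  rw [← setIntegral_closedBall_comp_add_right m _ hc, ← integral_const_mul]
  refine setIntegral_congr_fun measurableSet_closedBall fun t _ => ?_
  rw [← AddChar.map_add_eq_mul]
  congr 1
  field_simp
  ring

variable {e : AddChar ℚ_[p] ℂ} (he1 : ∀ t : ℚ_[p], ‖t‖ ≤ 1 → e t = 1)
include he1

lemma integrableOn_closedBall_inv_pow (hm : m (closedBall 0 1) = 1) {g : ℚ_[p] → ℚ_[p]}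
    (hg : Continuous g) (x : ℚ_[p]) (k : ℕ) :
    IntegrableOn (fun t => e (g t)) (closedBall x ((p : ℝ) ^ k)⁻¹) m :=
  Measure.integrableOn_of_bounded (M := 1)
    (by simp [measure_closedBall_inv_pow hm, hp.out.ne_zero])
    ((continuous_of_forall_norm_le_one he1).comp hg).aestronglyMeasurable
    (ae_of_all _ fun t => (norm_apply_eq_one he1 _).le)

lemma setIntegral_quadratic_eq_zero (he : ∀ y : ℚ_[p], ‖y‖ = p → e y ≠ 1) {a b x : ℚ_[p]}
    {r : ℝ} (h₁ : p ≤ r * ‖a + 2 * b * x‖) (h₂ : p * ‖b‖ * r ≤ ‖a + 2 * b * x‖) :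
    ∫ t in closedBall x r, e (a * t + b * t ^ 2) ∂m = 0 := by
  set u := a + 2 * b * x
  have hp0 : (0 : ℝ) < p := mod_cast hp.out.pos
  have hu : 0 < ‖u‖ := by
    by_contra! h
    rw [le_antisymm h (norm_nonneg u), mul_zero] at h₁
    exact hp0.not_ge h₁
  -- The shift by `s = p⁻¹ / u` multiplies the integrand by `e (p⁻¹) ≠ 1`.
  have hs : ‖(p : ℚ_[p])⁻¹ / u‖ = p / ‖u‖ := by rw [norm_div, norm_inv, norm_p, inv_inv]
  refine setIntegral_closedBall_eq_zero_of_comp_add m (f := fun t => e (a * t + b * t ^ 2))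
    (s := (p : ℚ_[p])⁻¹ / u) (c := e (u * ((p : ℚ_[p])⁻¹ / u))) ?_ (he _ ?_)
    fun t ht => apply_quadratic_comp_add he1 ?_ ?_ ht
  · rw [hs, div_le_iff₀ hu]; exact h₁
  · rw [mul_div_cancel₀ _ (norm_pos_iff.1 hu), norm_inv, norm_p, inv_inv]
  · rw [hs, div_le_iff₀ hu]; exact h₁
  · rw [norm_mul, hs, mul_div_assoc', div_mul_eq_mul_div, div_le_one hu, mul_comm ‖b‖]
    exact h₂

lemma setIntegral_mul_sq_closedBall_one (hm : m (closedBall 0 1) = 1) (hodd : Odd p)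
    (he : ∀ y : ℚ_[p], ‖y‖ = p → e y ≠ 1) {b : ℚ_[p]} {d : ℕ} (hb : ((p : ℝ) ^ d) ^ 2 ≤ ‖b‖) :
    ∫ t in closedBall 0 1, e (b * t ^ 2) ∂m =
      ∫ t in closedBall 0 ((p : ℝ) ^ d)⁻¹, e (b * t ^ 2) ∂m := by
  have hp0 : (0 : ℝ) < p := mod_cast hp.out.pos
  have hsum := setIntegral_closedBall_zero_eq_sum 0 d
    (integrableOn_closedBall_inv_pow he1 hm (g := fun t => b * t ^ 2) (by fun_prop) 0 0)
  simp only [pow_zero, inv_one, mul_one, zero_add] at hsum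
  rw [hsum, sum_eq_single_of_mem 0 (mem_range.2 (pow_pos hp.out.pos d)), Nat.cast_zero]
  -- On the other cosets `j + p ^ d ℤ_[p]` the phase has derivative `2 b j` of size `≥ p ^ (d + 1)`.
  intro j hj hj0
  have hjn : p * ((p : ℝ) ^ d)⁻¹ ≤ ‖(j : ℚ_[p])‖ := by
    have := inv_pow_lt_norm_natCast_sub (mem_range.1 hj) (pow_pos hp.out.pos d) hj0
    rw [Nat.cast_zero, sub_zero, ← norm_p_pow_eq_inv] at this
    rw [← norm_p_pow_eq_inv]
    exact natCast_mul_norm_le_of_norm_lt this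
  have hu : ‖0 + 2 * b * j‖ = ‖b‖ * ‖(j : ℚ_[p])‖ := by
    rw [zero_add, norm_mul, norm_mul, norm_two_eq_one hodd, one_mul]
  have h₁ : (p : ℝ) ≤ ((p : ℝ) ^ d)⁻¹ * ‖0 + 2 * b * j‖ := by
    rw [hu]
    calc (p : ℝ) = ((p : ℝ) ^ d)⁻¹ * (((p : ℝ) ^ d) ^ 2 * (p * ((p : ℝ) ^ d)⁻¹)) := by
          field_simp
      _ ≤ ((p : ℝ) ^ d)⁻¹ * (‖b‖ * ‖(j : ℚ_[p])‖) := by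
          gcongr ((p : ℝ) ^ d)⁻¹ * ?_
          exact mul_le_mul hb hjn (by positivity) (norm_nonneg _)
  have h₂ : p * ‖b‖ * ((p : ℝ) ^ d)⁻¹ ≤ ‖0 + 2 * b * j‖ := by
    rw [hu]
    calc _ = ‖b‖ * (p * ((p : ℝ) ^ d)⁻¹) := by ring
      _ ≤ _ := mul_le_mul_of_nonneg_left hjn (norm_nonneg _)
  simpa using setIntegral_quadratic_eq_zero he1 he (m := m) h₁ h₂

lemma norm_setIntegral_mul_sq (hm : m (closedBall 0 1) = 1) (hodd : Odd p)
    (he : ∀ y : ℚ_[p], ‖y‖ = p → e y ≠ 1) {b : ℚ_[p]} (hb : 1 ≤ ‖b‖) :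
    ‖∫ t in closedBall 0 1, e (b * t ^ 2) ∂m‖ = ‖b‖ ^ (-(1 / 2) : ℝ) := by
  have hp0 : (0 : ℝ) < p := mod_cast hp.out.pos
  rw [Real.rpow_neg (norm_nonneg _), ← Real.sqrt_eq_rpow]
  obtain ⟨N, hN⟩ := exists_norm_eq_pow_of_one_le hb
  obtain ⟨k, rfl | rfl⟩ := Nat.even_or_odd' N
  · -- `e (b t²) = 1` on `p ^ k ℤ_[p]`.
    have hbk : ‖b‖ = ((p : ℝ) ^ k) ^ 2 := by rw [hN]; ring
    rw [setIntegral_mul_sq_closedBall_one he1 hm hodd he hbk.ge,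
      setIntegral_congr_fun measurableSet_closedBall fun t ht =>
        apply_mul_sq_eq_of_mem_closedBall he1 ht le_rfl (by simp)
          (le_of_eq (by rw [hbk]; field_simp)),
      setIntegral_const, measureReal_closedBall_inv_pow hm, hbk, Real.sqrt_sq (by positivity)]
    simp
  · -- `e (b t²)` is constant on the cosets of `p ^ (k + 1) ℤ_[p]` in `p ^ k ℤ_[p]`, where it
    -- takes the values of a quadratic Gauss sum modulo `p`.
    have hbk : ‖b‖ = ((p : ℝ) ^ k) ^ 2 * p := by rw [hN]; ring
    have hpk : 0 < (p : ℝ) ^ k := pow_pos hp0 k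
    have hc : ‖b * (p : ℚ_[p]) ^ (2 * k)‖ = p := by
      rw [norm_mul, norm_p_pow_eq_inv, hbk, pow_mul']; field_simp
    have hcoset (i : ℕ) :
        ∫ t in closedBall ((i : ℚ_[p]) * p ^ k) ((p : ℝ) ^ (k + 1))⁻¹, e (b * t ^ 2) ∂m =
          ((p : ℝ) ^ (k + 1))⁻¹ • e (b * p ^ (2 * k) * i ^ 2) := by
      have hr : ((p : ℝ) ^ (k + 1))⁻¹ ≤ ((p : ℝ) ^ k)⁻¹ :=
        inv_anti₀ hpk (pow_le_pow_right₀ (mod_cast hp.out.one_le) k.le_succ)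
      have hy : ‖(i : ℚ_[p]) * p ^ k‖ ≤ ((p : ℝ) ^ k)⁻¹ := by
        rw [norm_mul, norm_p_pow_eq_inv]
        exact mul_le_of_le_one_left (inv_pos.2 hpk).le (mod_cast norm_int_le_one i)
      rw [setIntegral_congr_fun measurableSet_closedBall fun t ht =>
          apply_mul_sq_eq_of_mem_closedBall he1 ht hr hy (le_of_eq (by rw [hbk]; field_simp; ring)),
        setIntegral_const, measureReal_closedBall_inv_pow hm]
      ring_nf
    have hsum := setIntegral_closedBall_zero_eq_sum k 1
      (integrableOn_closedBall_inv_pow he1 hm (g := fun t => b * t ^ 2) (by fun_prop) 0 k)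
    have hp2 : p ≠ 2 := by rintro rfl; exact Nat.not_odd_iff_even.2 even_two hodd
    rw [setIntegral_mul_sq_closedBall_one he1 hm hodd he (d := k)
        (by rw [hbk]; exact le_mul_of_one_le_right (by positivity) (mod_cast hp.out.one_le)),
      hsum, pow_one, sum_congr rfl fun i _ => hcoset i, ← smul_sum, norm_smul,
      norm_sum_range_apply_mul_sq he1 he hp2 hc, hbk, Real.sqrt_mul (by positivity),
      Real.sqrt_sq hpk.le, norm_inv, norm_pow, Real.norm_natCast, pow_succ]
    field_simp
    exact Real.sq_sqrt hp0.le

end Haar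

end Padic

theorem stmt_12 (p : ℕ) [Fact p.Prime] (hodd : Odd p)
    [MeasurableSpace ℚ_[p]] [BorelSpace ℚ_[p]]
    (m : Measure ℚ_[p]) [m.IsAddLeftInvariant]
    (hm : m {t : ℚ_[p] | ‖t‖ ≤ 1} = 1)
    (e : AddChar ℚ_[p] ℂ)
    (he1 : ∀ t : ℚ_[p], ‖t‖ ≤ 1 → e t = 1)
    (he2 : ∃ t : ℚ_[p], ‖t‖ ≤ p ∧ e t ≠ 1)
    (a b : ℚ_[p]) (hab : 1 < max ‖a‖ ‖b‖) :
    (‖a‖ ≤ ‖b‖ →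
      ‖∫ t in {t : ℚ_[p] | ‖t‖ ≤ 1}, e (a * t + b * t ^ 2) ∂m‖
        = ‖b‖ ^ (-(1 / 2) : ℝ)) ∧
    (‖b‖ < ‖a‖ →
      (∫ t in {t : ℚ_[p] | ‖t‖ ≤ 1}, e (a * t + b * t ^ 2) ∂m) = 0) := by
  have hball : {t : ℚ_[p] | ‖t‖ ≤ 1} = closedBall 0 1 := by ext; simp
  rw [hball] at hm ⊢
  have he (y : ℚ_[p]) (hy : ‖y‖ = p) : e y ≠ 1 := Padic.apply_ne_one_of_norm_eq he1 he2 hy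
  refine ⟨fun hle => ?_, fun hlt => ?_⟩
  · have hb : 1 < ‖b‖ := hab.trans_le (max_le hle le_rfl)
    rw [Padic.setIntegral_quadratic_eq_mul hodd hle (norm_pos_iff.1 (one_pos.trans hb)),
      norm_mul, Padic.norm_apply_eq_one he1, one_mul,
      Padic.norm_setIntegral_mul_sq he1 hm hodd he hb.le]
  · have ha : ‖(1 : ℚ_[p])‖ < ‖a‖ := by simpa [max_eq_left hlt.le] using hab
    refine Padic.setIntegral_quadratic_eq_zero he1 he (x := 0) ?_ ?_
    · simpa using Padic.natCast_mul_norm_le_of_norm_lt ha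
    · simpa using Padic.natCast_mul_norm_le_of_norm_lt hlt
end
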